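/- arXiv:0904.4743 — 8 statements merged into one kernel-verified Lean document; each statement's English description precedes it below -/
import Mathlib

section
/- Let J ⊆ {1,…,n−1} be nonempty and let (b_k)_{k∈J} be pairwise distinct reals in [a_n, a_0]. Set e_k = A(b_k) / ∏_{l∈J, l≠k}(b_k − b_l). Then the function λ ↦ A(λ)/∏_{k∈J}(λ−b_k) − ∑_{k∈J} e_k/(λ−b_k), defined on [a_n, a_0] ∖ {b_k : k∈J}, extends to a function B of class C^{n−1−#J} on [a_n, a_0] that satisfies (−1)^{#J+m} B^{(m)}(λ) < 0 for all λ ∈ [a_n, a_0] and all 0 ≤ m ≤ n−1−#J. -/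
/-!
The remainder is built from `A` by `#J` successive divided differences: if `g` is the remainder
for `S`, the remainder for `insert j S` is `x ↦ (g x - g (b j)) / (x - b j)`, which extends to
`dslope g (b j)`. Since `dslope g c x = ∫ t in 0..1, g' (c + t * (x - c))`, differentiating
under the integral gives `(dslope g c)^(m) x = ∫ t in 0..1, t ^ m * g^(m+1) (c + t * (x - c))`,
so each step costs one derivative and shifts the sign pattern of the derivatives by one.
Beforehand `A` is replaced, by means of a bump function, with a `C^(n-1)` function on all of `ℝ`
that agrees with it near `[a_n, a_0]`.
-/

open Set Filter Topology MeasureTheory Finset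

noncomputable def segmentIntegral (c : ℝ) (m : ℕ) (h : ℝ → ℝ) (x : ℝ) : ℝ :=
  ∫ t in (0 : ℝ)..1, t ^ m * h (c + t * (x - c))

section segmentIntegral

variable {c : ℝ} {m : ℕ} {h : ℝ → ℝ}

theorem continuous_segmentIntegral (hh : Continuous h) : Continuous (segmentIntegral c m h) :=
  intervalIntegral.continuous_parametric_intervalIntegral_of_continuous' (by fun_prop) 0 1

theorem hasDerivAt_segmentIntegral (hh : ContDiff ℝ 1 h) (x₀ : ℝ) :
    HasDerivAt (segmentIntegral c m h) (segmentIntegral c (m + 1) (deriv h) x₀) x₀ := by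
  obtain ⟨C, hC⟩ := ((isCompact_closedBall x₀ 1).prod (isCompact_Icc (a := (0 : ℝ)) (b := 1))
    ).exists_bound_of_continuousOn
    (f := fun p : ℝ × ℝ => p.2 ^ (m + 1) * deriv h (c + p.2 * (p.1 - c))) (by fun_prop)
  refine (intervalIntegral.hasDerivAt_integral_of_dominated_loc_of_deriv_le
    (F' := fun x t => t ^ (m + 1) * deriv h (c + t * (x - c))) (bound := fun _ => C)
    (Metric.ball_mem_nhds x₀ one_pos) (.of_forall fun x => ?_) ?_ ?_ ?_ intervalIntegrable_const
    ?_).2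
  · exact (by fun_prop : Continuous fun t : ℝ => t ^ m * h (c + t * (x - c))).aestronglyMeasurable
  · exact (by fun_prop : Continuous fun t : ℝ => t ^ m * h (c + t * (x₀ - c))).intervalIntegrable _ _
  · exact (by fun_prop : Continuous fun t : ℝ =>
      t ^ (m + 1) * deriv h (c + t * (x₀ - c))).aestronglyMeasurable
  · refine .of_forall fun t ht x hx => hC (x, t) ⟨Metric.ball_subset_closedBall hx, ?_⟩
    rw [uIoc_of_le zero_le_one] at ht
    exact Ioc_subset_Icc_self ht
  · refine .of_forall fun t _ x _ => ?_
    have hchain := ((hh.differentiable one_ne_zero).differentiableAt.hasDerivAt.comp x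
      (((hasDerivAt_id x).sub_const c).const_mul t |>.const_add c)).const_mul (t ^ m)
    exact hchain.congr_deriv (by simp only [id]; ring)

theorem deriv_segmentIntegral (hh : ContDiff ℝ 1 h) :
    deriv (segmentIntegral c m h) = segmentIntegral c (m + 1) (deriv h) :=
  funext fun x => (hasDerivAt_segmentIntegral hh x).deriv

theorem contDiff_segmentIntegral {k : ℕ} (hh : ContDiff ℝ k h) :
    ContDiff ℝ k (segmentIntegral c m h) := by
  induction k generalizing m h with
  | zero => exact contDiff_zero.2 (continuous_segmentIntegral (contDiff_zero.1 hh))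
  | succ k ih =>
    have hh1 : ContDiff ℝ 1 h := hh.of_le (by exact_mod_cast Nat.le_add_left 1 k)
    rw [Nat.cast_succ, contDiff_succ_iff_deriv] at hh ⊢
    refine ⟨fun x => (hasDerivAt_segmentIntegral hh1 x).differentiableAt, by simp, ?_⟩
    rw [deriv_segmentIntegral hh1]
    exact ih hh.2.2

theorem iteratedDeriv_segmentIntegral {j : ℕ} (hh : ContDiff ℝ j h) :
    iteratedDeriv j (segmentIntegral c m h) = segmentIntegral c (m + j) (iteratedDeriv j h) := by
  induction j generalizing m h with
  | zero => simp
  | succ j ih =>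
    have hh1 : ContDiff ℝ 1 h := hh.of_le (by exact_mod_cast Nat.le_add_left 1 j)
    rw [Nat.cast_succ, contDiff_succ_iff_deriv] at hh
    rw [iteratedDeriv_succ', deriv_segmentIntegral hh1, ih hh.2.2, iteratedDeriv_succ',
      Nat.add_right_comm, Nat.add_assoc]

theorem segmentIntegral_const_mul (a : ℝ) (x : ℝ) :
    segmentIntegral c m (fun y => a * h y) x = a * segmentIntegral c m h x := by
  simp only [segmentIntegral, ← intervalIntegral.integral_const_mul, mul_left_comm]

theorem segmentIntegral_pos {s : Set ℝ} (hs : Convex ℝ s) (hh : Continuous h)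
    (hpos : ∀ y ∈ s, 0 < h y) {x : ℝ} (hc : c ∈ s) (hx : x ∈ s) :
    0 < segmentIntegral c m h x := by
  refine intervalIntegral.intervalIntegral_pos_of_pos_on
    ((by fun_prop : Continuous fun t : ℝ => t ^ m * h (c + t * (x - c))).intervalIntegrable _ _)
    (fun t ht => mul_pos (pow_pos ht.1 m) (hpos _ ?_)) zero_lt_one
  exact hs.add_smul_sub_mem hc hx ⟨ht.1.le, ht.2.le⟩

end segmentIntegral

theorem dslope_eq_segmentIntegral {f : ℝ → ℝ} (hf : ContDiff ℝ 1 f) (c : ℝ) :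
    dslope f c = segmentIntegral c 0 (deriv f) := by
  funext x
  rcases eq_or_ne x c with rfl | hxc
  · simp [segmentIntegral]
  have hxc' : x - c ≠ 0 := sub_ne_zero.2 hxc
  have hftc : ∫ y in c..x, deriv f y = f x - f c :=
    intervalIntegral.integral_deriv_eq_sub
      (fun y _ => (hf.differentiable one_ne_zero).differentiableAt)
      ((hf.continuous_deriv le_rfl).intervalIntegrable _ _)
  have hsub := intervalIntegral.integral_comp_mul_add (a := 0) (b := 1) (deriv f) hxc' c
  simp only [mul_zero, zero_add, mul_one, sub_add_cancel, hftc, smul_eq_mul] at hsub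
  rw [dslope_of_ne _ hxc, slope_def_field, segmentIntegral]
  simp only [pow_zero, one_mul]
  rw [← inv_mul_eq_div, ← hsub]
  congr 1
  ext t
  ring_nf

theorem contDiff_dslope {f : ℝ → ℝ} {k : ℕ} (hf : ContDiff ℝ (k + 1) f) (c : ℝ) :
    ContDiff ℝ k (dslope f c) := by
  have hf1 : ContDiff ℝ 1 f := hf.of_le (by exact_mod_cast Nat.le_add_left 1 k)
  rw [dslope_eq_segmentIntegral hf1]
  exact contDiff_segmentIntegral (contDiff_succ_iff_deriv.1 hf).2.2

theorem iteratedDeriv_dslope {f : ℝ → ℝ} {m : ℕ} (hf : ContDiff ℝ (m + 1) f) (c : ℝ) :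
    iteratedDeriv m (dslope f c) = segmentIntegral c m (iteratedDeriv (m + 1) f) := by
  have hf1 : ContDiff ℝ 1 f := hf.of_le (by exact_mod_cast Nat.le_add_left 1 m)
  rw [dslope_eq_segmentIntegral hf1, iteratedDeriv_segmentIntegral
    (contDiff_succ_iff_deriv.1 hf).2.2, zero_add, iteratedDeriv_succ']

theorem pos_mul_iteratedDeriv_dslope {f : ℝ → ℝ} {m : ℕ} (hf : ContDiff ℝ (m + 1) f)
    {s : Set ℝ} (hs : Convex ℝ s) {ε : ℝ} (hpos : ∀ y ∈ s, 0 < ε * iteratedDeriv (m + 1) f y)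
    {c x : ℝ} (hc : c ∈ s) (hx : x ∈ s) :
    0 < ε * iteratedDeriv m (dslope f c) x := by
  rw [iteratedDeriv_dslope hf, ← segmentIntegral_const_mul]
  exact segmentIntegral_pos hs (continuous_const.mul (hf.continuous_iteratedDeriv' (m + 1)))
    hpos hc hx

theorem exists_contDiff_eventuallyEq_of_contDiffOn {f : ℝ → ℝ} {N : ℕ} {u v a b : ℝ}
    (hf : ContDiffOn ℝ N f (Ioo u v)) (hu : u < a) (hab : a ≤ b) (hv : b < v) :
    ∃ F : ℝ → ℝ, ContDiff ℝ N F ∧ ∀ x ∈ Icc a b, F =ᶠ[𝓝 x] f := by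
  set δ := min (a - u) (v - b)
  have hδ : 0 < δ := lt_min (sub_pos.2 hu) (sub_pos.2 hv)
  have hδa : δ ≤ a - u := min_le_left _ _
  have hδb : δ ≤ v - b := min_le_right _ _
  let φ : ContDiffBump ((u + v) / 2) :=
    ⟨(v - u) / 2 - δ / 2, (v - u) / 2 - δ / 4, by linarith, by linarith⟩
  refine ⟨fun x => φ x * f x, contDiff_iff_contDiffAt.2 fun x => ?_, fun x hx => ?_⟩
  · by_cases hx : x ∈ Ioo u v
    · exact φ.contDiffAt.mul (hf.contDiffAt (Ioo_mem_nhds hx.1 hx.2))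
    · have hφ : x ∉ tsupport φ := by
        rw [φ.tsupport_eq, Metric.mem_closedBall, Real.dist_eq, abs_le]
        simp only [Set.mem_Ioo, not_and_or, not_lt] at hx
        rcases hx with hx | hx <;> (simp only [φ]; intro h; linarith [h.1, h.2])
      refine contDiffAt_const (c := (0 : ℝ)).congr_of_eventuallyEq ?_
      filter_upwards [notMem_tsupport_iff_eventuallyEq.1 hφ] with y hy
      simp [hy]
  · have hball : x ∈ Metric.ball ((u + v) / 2) φ.rIn := by
      rw [Metric.mem_ball, Real.dist_eq, abs_lt]
      simp only [φ]
      constructor <;> linarith [hx.1, hx.2]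
    filter_upwards [φ.eventuallyEq_one_of_mem_ball hball] with y hy
    simp [hy]

noncomputable def partialFractionRemainder {ι : Type*} [DecidableEq ι] (f : ℝ → ℝ) (b : ι → ℝ)
    (S : Finset ι) (x : ℝ) : ℝ :=
  f x / ∏ k ∈ S, (x - b k) - ∑ k ∈ S, (f (b k) / ∏ l ∈ S.erase k, (b k - b l)) / (x - b k)

section partialFractionRemainder

variable {ι : Type*} [DecidableEq ι] {f : ℝ → ℝ} {b : ι → ℝ}

@[simp]
theorem partialFractionRemainder_empty : partialFractionRemainder f b ∅ = f := by
  funext x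
  simp [partialFractionRemainder]

theorem partialFractionRemainder_insert {S : Finset ι} {j : ι} (hj : j ∉ S) {x : ℝ}
    (hx : ∀ k ∈ insert j S, x ≠ b k) (hjS : ∀ k ∈ S, b j ≠ b k) :
    partialFractionRemainder f b (insert j S) x =
      slope (partialFractionRemainder f b S) (b j) x := by
  have hxj : x - b j ≠ 0 := sub_ne_zero.2 (hx j (mem_insert_self j S))
  have hcoeff : ∀ k ∈ S, (f (b k) / ∏ l ∈ (insert j S).erase k, (b k - b l)) / (x - b k) =
      ((f (b k) / ∏ l ∈ S.erase k, (b k - b l)) / (x - b k) -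
        (f (b k) / ∏ l ∈ S.erase k, (b k - b l)) / (b j - b k)) / (x - b j) := by
    intro k hk
    have hkj : k ≠ j := fun h => hj (h ▸ hk)
    have hxk : x - b k ≠ 0 := sub_ne_zero.2 (hx k (mem_insert_of_mem hk))
    have hjk : b j - b k ≠ 0 := sub_ne_zero.2 (hjS k hk)
    have hkj' : b k - b j ≠ 0 := sub_ne_zero.2 (hjS k hk).symm
    rw [erase_insert_of_ne hkj.symm, prod_insert fun h => hj (mem_of_mem_erase h), mul_comm,
      ← div_div]
    generalize f (b k) / ∏ l ∈ S.erase k, (b k - b l) = q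
    field_simp
    ring
  rw [slope_def_field, partialFractionRemainder, partialFractionRemainder,
    partialFractionRemainder, prod_insert hj, sum_insert hj, erase_insert hj, sum_congr rfl hcoeff,
    ← sum_div, sum_sub_distrib]
  generalize ∑ k ∈ S, (f (b k) / ∏ l ∈ S.erase k, (b k - b l)) / (x - b k) = σx
  generalize ∑ k ∈ S, (f (b k) / ∏ l ∈ S.erase k, (b k - b l)) / (b j - b k) = σj
  field_simp
  ring

end partialFractionRemainder

theorem exists_contDiff_partialFractionRemainder {ι : Type*} [DecidableEq ι] {f : ℝ → ℝ}
    {N : ℕ} (hf : ContDiff ℝ N f) {s : Set ℝ} (hs : Convex ℝ s)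
    (hsign : ∀ m, 1 ≤ m → m ≤ N → ∀ x ∈ s, 0 < (-1 : ℝ) ^ (m + 1) * iteratedDeriv m f x)
    {b : ι → ℝ} (S : Finset ι) (hS : S.card ≤ N) (hbs : ∀ k ∈ S, b k ∈ s)
    (hb : Set.InjOn b S) :
    ∃ g : ℝ → ℝ, ContDiff ℝ (N - S.card : ℕ) g ∧
      (∀ x, (∀ k ∈ S, x ≠ b k) → g x = partialFractionRemainder f b S x) ∧
      ∀ m, 1 ≤ S.card + m → m ≤ N - S.card → ∀ x ∈ s,
        0 < (-1 : ℝ) ^ (S.card + m + 1) * iteratedDeriv m g x := by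
  induction S using Finset.induction_on with
  | empty => exact ⟨f, by simpa using hf, by simp, by simpa using hsign⟩
  | @insert j S hj ih =>
    rw [Finset.card_insert_of_notMem hj] at hS ⊢
    have hjs : b j ∈ s := hbs j (Finset.mem_insert_self j S)
    have hjS : ∀ k ∈ S, b j ≠ b k := fun k hk hjk =>
      hj (hb (Finset.mem_insert_self j S) (Finset.mem_insert_of_mem hk) hjk ▸ hk)
    obtain ⟨g, hg, hgS, hgsign⟩ := ih (by omega)
      (fun k hk => hbs k (Finset.mem_insert_of_mem hk)) (hb.mono (by simp))
    have hN : N - S.card = N - (S.card + 1) + 1 := by omega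
    rw [hN] at hg hgsign
    refine ⟨dslope g (b j), contDiff_dslope hg (b j), fun x hx => ?_, fun m _ hm x hx => ?_⟩
    · have hxj : x ≠ b j := hx j (Finset.mem_insert_self j S)
      rw [partialFractionRemainder_insert hj hx hjS, dslope_of_ne _ hxj, slope_def_field,
        slope_def_field, hgS x fun k hk => hx k (Finset.mem_insert_of_mem hk), hgS (b j) hjS]
    · rw [show S.card + 1 + m + 1 = S.card + (m + 1) + 1 by omega]
      exact pos_mul_iteratedDeriv_dslope (hg.of_le (by exact_mod_cast by omega)) hs
        (hgsign (m + 1) (by omega) (by omega)) hjs hx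

theorem stmt_4_general (n : ℕ) (an a0 : ℝ) (h1 : an < a0)
    -- condition (∗) for `A`
    (A : ℝ → ℝ) (u v : ℝ) (hu : u < an) (hv : a0 < v)
    (hA : ContDiffOn ℝ (↑(n - 1)) A (Set.Ioo u v))
    (hAd : ∀ k, 1 ≤ k → k ≤ n - 1 → ∀ x ∈ Set.Icc an a0,
      0 < (-1 : ℝ) ^ (k - 1) * iteratedDeriv k A x)
    (J : Finset ℕ) (hJ : J ⊆ Finset.Icc 1 (n - 1)) (hJne : J.Nonempty)
    (b : ℕ → ℝ) (hbmem : ∀ k ∈ J, b k ∈ Set.Icc an a0)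
    (hbdist : ∀ k ∈ J, ∀ l ∈ J, k ≠ l → b k ≠ b l) :
    ∃ B : ℝ → ℝ,
      (∀ x ∈ Set.Icc an a0, (∀ k ∈ J, x ≠ b k) →
        B x = A x / (∏ k ∈ J, (x - b k)) -
          ∑ k ∈ J, (A (b k) / ∏ l ∈ J.erase k, (b k - b l)) / (x - b k)) ∧
      ContDiffOn ℝ (↑(n - 1 - J.card)) B (Set.Icc an a0) ∧
      ∀ m, m ≤ n - 1 - J.card → ∀ x ∈ Set.Icc an a0,
        (-1 : ℝ) ^ (J.card + m) * iteratedDerivWithin m B (Set.Icc an a0) x < 0 := by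
  obtain ⟨F, hF, hFA⟩ := exists_contDiff_eventuallyEq_of_contDiffOn hA hu h1.le hv
  have hFsign : ∀ k, 1 ≤ k → k ≤ n - 1 → ∀ x ∈ Icc an a0,
      0 < (-1 : ℝ) ^ (k + 1) * iteratedDeriv k F x := fun k hk hkn x hx => by
    rw [(hFA x hx).iteratedDeriv_eq, show k + 1 = k - 1 + 2 by omega, pow_add, neg_one_sq, mul_one]
    exact hAd k hk hkn x hx
  have hJcard : J.card ≤ n - 1 := by simpa using Finset.card_le_card hJ
  obtain ⟨B, hB, hBJ, hBsign⟩ := exists_contDiff_partialFractionRemainder hF (convex_Icc an a0)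
    hFsign J hJcard hbmem fun k hk l hl hkl => by_contra fun h => hbdist k hk l hl h hkl
  refine ⟨B, fun x hx hxJ => ?_, hB.contDiffOn, fun m hm x hx => ?_⟩
  · rw [hBJ x hxJ, partialFractionRemainder, (hFA x hx).eq_of_nhds]
    congr 1
    exact Finset.sum_congr rfl fun k hk => by rw [(hFA (b k) (hbmem k hk)).eq_of_nhds]
  · rw [iteratedDerivWithin_eq_iteratedDeriv (uniqueDiffOn_Icc h1)
      (hB.of_le (by exact_mod_cast hm)).contDiffAt hx]
    have hBm := hBsign m (by linarith [hJne.card_pos]) hm x hx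
    rw [pow_succ] at hBm
    linarith

/-- Lemma 4.3.  For a nonempty `J ⊆ {1,…,n−1}` and pairwise
distinct points `b_k ∈ [a_n, a_0]` (`k ∈ J`), the function
`λ ↦ A(λ)/∏_{k∈J}(λ−b_k) − ∑_{k∈J} e_k/(λ−b_k)` (with
`e_k = A(b_k)/∏_{l∈J,l≠k}(b_k−b_l)`) extends to a `C^{n−1−#J}` function `B` on
`[a_n, a_0]` satisfying `(−1)^{#J+m} B^{(m)}(λ) < 0` for `0 ≤ m ≤ n−1−#J`. -/
theorem stmt_4 (n : ℕ) (hn : 3 ≤ n) (an a0 : ℝ) (h0 : 0 < an) (h1 : an < a0)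
    -- condition (∗) for `A`
    (A : ℝ → ℝ) (u v : ℝ) (hu : u < an) (hv : a0 < v)
    (hA : ContDiffOn ℝ (↑(n - 1)) A (Set.Ioo u v))
    (hApos : ∀ x ∈ Set.Icc an a0, 0 < A x)
    (hAd : ∀ k, 1 ≤ k → k ≤ n - 1 → ∀ x ∈ Set.Icc an a0,
      0 < (-1 : ℝ) ^ (k - 1) * iteratedDeriv k A x)
    (J : Finset ℕ) (hJ : J ⊆ Finset.Icc 1 (n - 1)) (hJne : J.Nonempty)
    (b : ℕ → ℝ) (hbmem : ∀ k ∈ J, b k ∈ Set.Icc an a0)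
    (hbdist : ∀ k ∈ J, ∀ l ∈ J, k ≠ l → b k ≠ b l) :
    ∃ B : ℝ → ℝ,
      (∀ x ∈ Set.Icc an a0, (∀ k ∈ J, x ≠ b k) →
        B x = A x / (∏ k ∈ J, (x - b k)) -
          ∑ k ∈ J, (A (b k) / ∏ l ∈ J.erase k, (b k - b l)) / (x - b k)) ∧
      ContDiffOn ℝ (↑(n - 1 - J.card)) B (Set.Icc an a0) ∧
      ∀ m, m ≤ n - 1 - J.card → ∀ x ∈ Set.Icc an a0,
        (-1 : ℝ) ^ (J.card + m) * iteratedDerivWithin m B (Set.Icc an a0) x < 0 :=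
  stmt_4_general n an a0 h1 A u v hu hv hA hAd J hJ hJne b hbmem hbdist
end

section
/- Fix b ∈ [p,q] and define B(λ) = ∫_0^1 A'(t(λ−b)+b) dt. Then B(λ) = (A(λ)−A(b))/(λ−b) for all λ ∈ [p,q] with λ ≠ b, B is of class C^{N−1} on [p,q], and (−1)^{1+m} B^{(m)}(λ) < 0 for all λ ∈ [p,q] and all 0 ≤ m ≤ N−1. -/
/-!
Differentiating `B(λ) = ∫₀¹ A'(t(λ-b)+b) dt` under the integral sign `m` times gives
`B⁽ᵐ⁾(λ) = ∫₀¹ tᵐ A⁽ᵐ⁺¹⁾(t(λ-b)+b) dt`: an average of `A⁽ᵐ⁺¹⁾` over the segment from `b` to `λ`,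
which lies in `[p,q]`, against the positive weight `tᵐ`. Hence `B⁽ᵐ⁾` has the sign `(-1)ᵐ` of
`A⁽ᵐ⁺¹⁾`. Differentiation under the integral is justified on the open interval `(u,v)`, where the
integrands are locally uniformly bounded. The divided-difference formula is the substitution
`y = t(λ-b)+b` followed by the fundamental theorem of calculus.
-/

open Set MeasureTheory Topology

section IteratedDerivChain

variable {𝕜 E : Type*} [NontriviallyNormedField 𝕜] [NormedAddCommGroup E] [NormedSpace 𝕜 E]
  {s : Set 𝕜} {F : ℕ → 𝕜 → E} {n : ℕ}

theorem iteratedDerivWithin_eqOn_of_hasDerivWithinAt_succ (hs : UniqueDiffOn 𝕜 s)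
    (hF : ∀ k < n, ∀ x ∈ s, HasDerivWithinAt (F k) (F (k + 1) x) s x) :
    ∀ k ≤ n, EqOn (iteratedDerivWithin k (F 0) s) (F k) s := by
  intro k hk
  induction k with
  | zero => exact fun x _ => by rw [iteratedDerivWithin_zero]
  | succ k ih =>
    intro x hx
    rw [iteratedDerivWithin_succ, derivWithin_congr (ih (by omega)) (ih (by omega) hx)]
    exact (hF k (by omega) x hx).derivWithin (hs x hx)

theorem contDiffOn_of_hasDerivWithinAt_succ (hs : UniqueDiffOn 𝕜 s)
    (hF : ∀ k < n, ∀ x ∈ s, HasDerivWithinAt (F k) (F (k + 1) x) s x)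
    (hcont : ContinuousOn (F n) s) : ContDiffOn 𝕜 n (F 0) s := by
  induction n generalizing F with
  | zero => exact contDiffOn_zero.2 hcont
  | succ n ih =>
    have hderiv : EqOn (derivWithin (F 0) s) (F 1) s := fun x hx =>
      (hF 0 (by omega) x hx).derivWithin (hs x hx)
    rw [Nat.cast_succ, contDiffOn_succ_iff_derivWithin hs]
    refine ⟨fun x hx => (hF 0 (by omega) x hx).differentiableWithinAt, by simp, ?_⟩
    exact (ih (F := fun k => F (k + 1)) (fun k hk => hF (k + 1) (by omega)) hcont).congr hderiv

end IteratedDerivChain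

section IteratedDerivOpen

variable {𝕜 E : Type*} [NontriviallyNormedField 𝕜] [NormedAddCommGroup E] [NormedSpace 𝕜 E]
  {s : Set 𝕜} {f : 𝕜 → E} {n : WithTop ℕ∞} {k : ℕ}

theorem ContDiffOn.continuousOn_iteratedDeriv_of_isOpen (hf : ContDiffOn 𝕜 n f s)
    (hs : IsOpen s) (hk : k ≤ n) : ContinuousOn (iteratedDeriv k f) s :=
  (hf.continuousOn_iteratedDerivWithin hk hs.uniqueDiffOn).congr
    (iteratedDerivWithin_of_isOpen hs).symm

theorem ContDiffOn.hasDerivAt_iteratedDeriv_of_isOpen (hf : ContDiffOn 𝕜 n f s)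
    (hs : IsOpen s) (hk : k < n) {x : 𝕜} (hx : x ∈ s) :
    HasDerivAt (iteratedDeriv k f) (iteratedDeriv (k + 1) f x) x := by
  have hdiff := (hf.differentiableOn_iteratedDerivWithin hk hs.uniqueDiffOn).congr
    (iteratedDerivWithin_of_isOpen hs).symm
  rw [iteratedDeriv_succ]
  exact ((hdiff x hx).differentiableAt (hs.mem_nhds hx)).hasDerivAt

end IteratedDerivOpen

theorem Convex.mul_sub_add_mem {s : Set ℝ} (hs : Convex ℝ s) {b x t : ℝ} (hb : b ∈ s)
    (hx : x ∈ s) (ht : t ∈ Icc (0 : ℝ) 1) : t * (x - b) + b ∈ s := by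
  simpa only [smul_eq_mul, add_comm] using hs.add_smul_sub_mem hb hx ht

theorem integral_deriv_comp_mul_sub_add {A : ℝ → ℝ} {b x : ℝ}
    (hA : ∀ y ∈ uIcc b x, DifferentiableAt ℝ A y)
    (hint : IntervalIntegrable (deriv A) volume b x) (hxb : x ≠ b) :
    ∫ t in (0 : ℝ)..1, deriv A (t * (x - b) + b) = (A x - A b) / (x - b) := by
  simp_rw [mul_comm _ (x - b)]
  rw [intervalIntegral.integral_comp_mul_add _ (sub_ne_zero.2 hxb)]
  simp only [mul_zero, zero_add, mul_one, sub_add_cancel, smul_eq_mul]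
  rw [intervalIntegral.integral_deriv_eq_sub hA hint, inv_mul_eq_div]
noncomputable def segmentMoment (g : ℝ → ℝ) (b : ℝ) (m : ℕ) (x : ℝ) : ℝ :=
  ∫ t in (0 : ℝ)..1, t ^ m * g (t * (x - b) + b)

namespace segmentMoment

variable {g g' : ℝ → ℝ} {s : Set ℝ} {b x : ℝ} {m : ℕ}

theorem const_mul (c : ℝ) :
    segmentMoment (fun y => c * g y) b m x = c * segmentMoment g b m x := by
  rw [segmentMoment, segmentMoment, ← intervalIntegral.integral_const_mul]
  congr 1 with t
  ring

theorem continuousOn_integrand (hs : Convex ℝ s) (hb : b ∈ s) (hx : x ∈ s)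
    (hg : ContinuousOn g s) :
    ContinuousOn (fun t => t ^ m * g (t * (x - b) + b)) (Icc 0 1) :=
  (continuousOn_pow m).mul <| hg.comp (by fun_prop) fun _ ht => hs.mul_sub_add_mem hb hx ht

theorem intervalIntegrable_integrand (hs : Convex ℝ s) (hb : b ∈ s) (hx : x ∈ s)
    (hg : ContinuousOn g s) :
    IntervalIntegrable (fun t => t ^ m * g (t * (x - b) + b)) volume 0 1 :=
  (continuousOn_integrand hs hb hx hg).intervalIntegrable_of_Icc zero_le_one

theorem pos (hs : Convex ℝ s) (hb : b ∈ s) (hx : x ∈ s) (hg : ContinuousOn g s)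
    (hpos : ∀ y ∈ s, 0 < g y) : 0 < segmentMoment g b m x := by
  refine intervalIntegral.intervalIntegral_pos_of_pos_on
    (intervalIntegrable_integrand hs hb hx hg) (fun t ht => ?_) zero_lt_one
  exact mul_pos (pow_pos ht.1 m) (hpos _ (hs.mul_sub_add_mem hb hx (Ioo_subset_Icc_self ht)))

theorem eventually_integrand_le (hs : IsOpen s) (hsc : Convex ℝ s) (hb : b ∈ s) {x₀ : ℝ}
    (hx₀ : x₀ ∈ s) (hg : ContinuousOn g s) :
    ∃ M, ∀ᶠ x in 𝓝 x₀, x ∈ s ∧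
      ∀ t ∈ Icc (0 : ℝ) 1, ∀ m : ℕ, ‖t ^ m * g (t * (x - b) + b)‖ ≤ M := by
  obtain ⟨ε, hε, hball⟩ := Metric.nhds_basis_closedBall.mem_iff.1 (hs.mem_nhds hx₀)
  have hleft : x₀ - ε ∈ s := hball (by simp [abs_of_pos hε])
  have hright : x₀ + ε ∈ s := hball (by simp [abs_of_pos hε])
  set K := Icc (min b (x₀ - ε)) (max b (x₀ + ε))
  have hKs : K ⊆ s := hsc.ordConnected.out
    (by rcases min_choice b (x₀ - ε) with h | h <;> rw [h] <;> assumption)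
    (by rcases max_choice b (x₀ + ε) with h | h <;> rw [h] <;> assumption)
  have hbK : b ∈ K := ⟨min_le_left _ _, le_max_left _ _⟩
  obtain ⟨M, hM⟩ := isCompact_Icc.exists_bound_of_continuousOn (hg.mono hKs)
  refine ⟨M, ?_⟩
  filter_upwards [Metric.ball_mem_nhds x₀ hε] with x hx
  have hxK : x ∈ K := by
    rw [Real.ball_eq_Ioo] at hx
    exact ⟨(min_le_right _ _).trans hx.1.le, hx.2.le.trans (le_max_right _ _)⟩
  refine ⟨hKs hxK, fun t ht m => ?_⟩
  have ht1 : ‖t ^ m‖ ≤ 1 := by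
    rw [norm_pow, Real.norm_of_nonneg ht.1]
    exact pow_le_one₀ ht.1 ht.2
  calc ‖t ^ m * g (t * (x - b) + b)‖ = ‖t ^ m‖ * ‖g (t * (x - b) + b)‖ := norm_mul _ _
    _ ≤ 1 * M := mul_le_mul ht1 (hM _ (convex_Icc _ _ |>.mul_sub_add_mem hbK hxK ht))
        (norm_nonneg _) zero_le_one
    _ = M := one_mul M

theorem continuousOn (hs : IsOpen s) (hsc : Convex ℝ s) (hb : b ∈ s) (hg : ContinuousOn g s) :
    ContinuousOn (segmentMoment g b m) s := by
  intro x₀ hx₀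
  obtain ⟨M, hM⟩ := eventually_integrand_le hs hsc hb hx₀ hg
  refine (intervalIntegral.continuousAt_of_dominated_interval (bound := fun _ => M) ?_ ?_
    intervalIntegrable_const ?_).continuousWithinAt
  · filter_upwards [hM] with x hx
    exact (intervalIntegrable_integrand hsc hb hx.1 hg).def'.aestronglyMeasurable
  · filter_upwards [hM] with x hx
    refine ae_of_all _ fun t ht => hx.2 t ?_ m
    rw [uIoc_of_le zero_le_one] at ht
    exact Ioc_subset_Icc_self ht
  · refine ae_of_all _ fun t ht => ?_
    rw [uIoc_of_le zero_le_one] at ht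
    have hts := hsc.mul_sub_add_mem hb hx₀ (Ioc_subset_Icc_self ht)
    exact continuousAt_const.mul <| ContinuousAt.comp (f := fun x => t * (x - b) + b)
      (hg.continuousAt (hs.mem_nhds hts)) (by fun_prop)

theorem hasDerivAt (hs : IsOpen s) (hsc : Convex ℝ s) (hb : b ∈ s)
    (hg : ∀ y ∈ s, HasDerivAt g (g' y) y) (hg' : ContinuousOn g' s) (hx : x ∈ s) :
    HasDerivAt (segmentMoment g b m) (segmentMoment g' b (m + 1) x) x := by
  have hgc : ContinuousOn g s := fun y hy => (hg y hy).continuousAt.continuousWithinAt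
  obtain ⟨M, hM⟩ := eventually_integrand_le hs hsc hb hx hg'
  refine (intervalIntegral.hasDerivAt_integral_of_dominated_loc_of_deriv_le
    (F := fun y t => t ^ m * g (t * (y - b) + b))
    (F' := fun y t => t ^ (m + 1) * g' (t * (y - b) + b)) (bound := fun _ => M) hM ?_
    (intervalIntegrable_integrand hsc hb hx hgc)
    (intervalIntegrable_integrand hsc hb hx hg').def'.aestronglyMeasurable ?_
    intervalIntegrable_const ?_).2
  · filter_upwards [hM] with y hy
    exact (intervalIntegrable_integrand hsc hb hy.1 hgc).def'.aestronglyMeasurable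
  · refine ae_of_all _ fun t ht y hy => hy.2 t ?_ (m + 1)
    rw [uIoc_of_le zero_le_one] at ht
    exact Ioc_subset_Icc_self ht
  · refine ae_of_all _ fun t ht y hy => ?_
    rw [uIoc_of_le zero_le_one] at ht
    have hts := hsc.mul_sub_add_mem hb hy.1 (Ioc_subset_Icc_self ht)
    have hlin : HasDerivAt (fun y => t * (y - b) + b) t y := by
      simpa using (((hasDerivAt_id y).sub_const b).const_mul t).add_const b
    exact (((hg _ hts).comp y hlin).const_mul (t ^ m)).congr_deriv (by ring)

end segmentMoment

/-- base case of the induction in Lemma 4.3.  If `A` is `C^N` on an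
open interval containing `[p,q]` with `(−1)^{k−1} A^{(k)} > 0` on `[p,q]` for
`1 ≤ k ≤ N`, and `b ∈ [p,q]`, then `B(λ) = ∫_0^1 A'(t(λ−b)+b) dt` equals the divided
difference `(A(λ)−A(b))/(λ−b)` for `λ ≠ b`, is `C^{N−1}` on `[p,q]`, and satisfies
`(−1)^{1+m} B^{(m)}(λ) < 0` on `[p,q]` for `0 ≤ m ≤ N−1`. -/
theorem stmt_5 (N : ℕ) (hN : 1 ≤ N) (p q : ℝ) (hpq : p < q)
    (A : ℝ → ℝ) (u v : ℝ) (hu : u < p) (hv : q < v)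
    (hA : ContDiffOn ℝ (↑N) A (Set.Ioo u v))
    (hAd : ∀ k, 1 ≤ k → k ≤ N → ∀ x ∈ Set.Icc p q,
      0 < (-1 : ℝ) ^ (k - 1) * iteratedDeriv k A x)
    (b : ℝ) (hb : b ∈ Set.Icc p q) :
    (∀ x ∈ Set.Icc p q, x ≠ b →
      (∫ t in (0:ℝ)..1, deriv A (t * (x - b) + b)) = (A x - A b) / (x - b)) ∧
    ContDiffOn ℝ (↑(N - 1)) (fun x => ∫ t in (0:ℝ)..1, deriv A (t * (x - b) + b))
      (Set.Icc p q) ∧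
    ∀ m, m ≤ N - 1 → ∀ x ∈ Set.Icc p q,
      (-1 : ℝ) ^ (1 + m) *
        iteratedDerivWithin m (fun y => ∫ t in (0:ℝ)..1, deriv A (t * (y - b) + b))
          (Set.Icc p q) x < 0 := by
  have hKs : Icc p q ⊆ Ioo u v := Icc_subset_Ioo hu hv
  have hcont : ∀ k ≤ N, ContinuousOn (iteratedDeriv k A) (Ioo u v) := fun k hk =>
    hA.continuousOn_iteratedDeriv_of_isOpen isOpen_Ioo (by exact_mod_cast hk)
  set F : ℕ → ℝ → ℝ := fun m => segmentMoment (iteratedDeriv (m + 1) A) b m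
  have hB : (fun x => ∫ t in (0:ℝ)..1, deriv A (t * (x - b) + b)) = F 0 := by
    ext x
    simp [F, segmentMoment, iteratedDeriv_one]
  have hF : ∀ k < N - 1, ∀ x ∈ Icc p q, HasDerivWithinAt (F k) (F (k + 1) x) (Icc p q) x :=
    fun k hk x hx => (segmentMoment.hasDerivAt isOpen_Ioo (convex_Ioo u v) (hKs hb)
      (fun y hy => hA.hasDerivAt_iteratedDeriv_of_isOpen isOpen_Ioo
        (by exact_mod_cast (by omega : k + 1 < N)) hy)
      (hcont (k + 2) (by omega)) (hKs hx)).hasDerivWithinAt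
  refine ⟨fun x hx hxb => ?_, ?_, fun m hm x hx => ?_⟩
  · have hsub : uIcc b x ⊆ Ioo u v := (uIcc_subset_Icc hb hx).trans hKs
    refine integral_deriv_comp_mul_sub_add (fun y hy => ?_) ?_ hxb
    · have hAdiff : DifferentiableOn ℝ A (Ioo u v) :=
        hA.differentiableOn (by exact_mod_cast (by omega : N ≠ 0))
      exact (hAdiff y (hsub hy)).differentiableAt (isOpen_Ioo.mem_nhds (hsub hy))
    · rw [← iteratedDeriv_one]
      exact ((hcont 1 hN).mono hsub).intervalIntegrable
  · rw [hB]
    exact contDiffOn_of_hasDerivWithinAt_succ (uniqueDiffOn_Icc hpq) hF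
      ((segmentMoment.continuousOn isOpen_Ioo (convex_Ioo u v) (hKs hb)
        (hcont (N - 1 + 1) (by omega))).mono hKs)
  · rw [hB, iteratedDerivWithin_eqOn_of_hasDerivWithinAt_succ (uniqueDiffOn_Icc hpq) hF m hm hx,
      pow_add, pow_one, neg_one_mul, neg_mul, neg_lt_zero, ← segmentMoment.const_mul]
    exact segmentMoment.pos (convex_Icc p q) hb hx
      (continuousOn_const.mul ((hcont (m + 1) (by omega)).mono hKs))
      (fun y hy => by simpa using hAd (m + 1) (by omega) (by omega) y hy)
end

section
/- Let I_1 and I_2 be disjoint nonempty sets with I_1 ∪ I_2 = {1,…,n}. Then there exists a real polynomial G with deg G ≤ n−2 such that (−1)^i G(λ) > 0 for all λ ∈ (a_i^+, a_{i−1}^-) whenever i ∈ I_1, and (−1)^i G(λ) < 0 for all λ ∈ (a_i^+, a_{i−1}^-) whenever i ∈ I_2. -/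
/-- Lemma 5.2.  If `{1,…,n} = I₁ ⊔ I₂` with both parts nonempty, there
is a real polynomial `G` with `deg G ≤ n−2` such that `(−1)^i G(λ) > 0` on
`(a_i^+, a_{i−1}^-)` for `i ∈ I₁` and `(−1)^i G(λ) < 0` there for `i ∈ I₂`. -/
theorem stmt_8 (n : ℕ) (hn : 2 ≤ n) (a b : ℕ → ℝ)
    (ha : ∀ i < n, a (i + 1) < a i) (han : 0 < a n)
    (hb : ∀ i, 1 ≤ i → i ≤ n - 1 → a (i + 1) < b i ∧ b i < a (i - 1) ∧ b i ≠ a i)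
    (hb2 : ∀ i, 1 ≤ i → i ≤ n - 2 → b (i + 1) < b i)
    (aplus aminus : ℕ → ℝ)
    (haplus : ∀ i, 1 ≤ i → i ≤ n - 1 → aplus i = max (a i) (b i))
    (haplusn : aplus n = a n)
    (haminus : ∀ i, 1 ≤ i → i ≤ n - 1 → aminus i = min (a i) (b i))
    (haminus0 : aminus 0 = a 0)
    (I₁ I₂ : Finset ℕ) (hdisj : Disjoint I₁ I₂) (hunion : I₁ ∪ I₂ = Finset.Icc 1 n)
    (h₁ : I₁.Nonempty) (h₂ : I₂.Nonempty) :
    ∃ G : Polynomial ℝ, G.natDegree ≤ n - 2 ∧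
      (∀ i ∈ I₁, ∀ x ∈ Set.Ioo (aplus i) (aminus (i - 1)), 0 < (-1 : ℝ) ^ i * G.eval x) ∧
      (∀ i ∈ I₂, ∀ x ∈ Set.Ioo (aplus i) (aminus (i - 1)), (-1 : ℝ) ^ i * G.eval x < 0) := by
  classical
  -- sign function
  set s : ℕ → ℝ := fun i => if i ∈ I₁ then (1:ℝ) else -1 with hs_def
  have hs_sq : ∀ i, s i * s i = 1 := by
    intro i; simp only [hs_def]; split <;> norm_num
  have hs1 : ∀ i ∈ I₁, s i = 1 := by intro i hi; simp [hs_def, hi]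
  have hs2 : ∀ i ∈ I₂, s i = -1 := by
    intro i hi
    have hni : i ∉ I₁ := fun h => (Finset.disjoint_left.mp hdisj h hi)
    simp [hs_def, hni]
  have hs_pm : ∀ i, s i = 1 ∨ s i = -1 := by
    intro i; simp only [hs_def]; split <;> simp
  set S : Finset ℕ := (Finset.Icc 1 (n-1)).filter (fun j => s j = s (j+1)) with hS_def
  -- the key sign-flipping identity
  have key : ∀ i, 1 ≤ i → i ≤ n →
      s i * ((-1:ℝ)^i * (-1:ℝ)^((S ∩ Finset.Icc 1 (i-1)).card)) = -(s 1) := by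
    intro i hi1
    induction i, hi1 using Nat.le_induction with
    | base =>
      intro _
      have : Finset.Icc 1 (1-1) = (∅ : Finset ℕ) := by
        apply Finset.Icc_eq_empty; omega
      rw [this]
      simp
    | succ i hi ih =>
      intro hin
      have ih' := ih (by omega)
      obtain ⟨k, rfl⟩ : ∃ k, i = k + 1 := ⟨i - 1, by omega⟩
      have hIcc : Finset.Icc 1 (k+1+1-1) = insert (k+1) (Finset.Icc 1 (k+1-1)) := by
        have h1 : k+1+1-1 = k+1 := by omega
        have h2 : k+1-1 = k := by omega
        rw [h1, h2, ← Finset.insert_Icc_right_eq_Icc_add_one (by omega)]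
      rw [hIcc]
      by_cases hiS : (k+1) ∈ S
      · have hmem : s (k+1) = s (k+1+1) := (Finset.mem_filter.mp hiS).2
        have hnotmem : (k+1) ∉ S ∩ Finset.Icc 1 (k+1-1) := by
          intro h
          have := (Finset.mem_Icc.mp (Finset.mem_inter.mp h).2).2
          omega
        rw [Finset.inter_insert_of_mem hiS, Finset.card_insert_of_notMem hnotmem]
        rw [← hmem, pow_succ, pow_succ]
        linear_combination ih'
      · have hmemIcc : (k+1) ∈ Finset.Icc 1 (n-1) := by
          rw [Finset.mem_Icc]; omega
        have hne : s (k+1) ≠ s (k+1+1) := by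
          intro h; exact hiS (Finset.mem_filter.mpr ⟨hmemIcc, h⟩)
        have hval : s (k+1+1) = -(s (k+1)) := by
          rcases hs_pm (k+1) with h1' | h1' <;> rcases hs_pm (k+1+1) with h2' | h2' <;>
            rw [h1', h2'] at hne ⊢ <;> first | (exact absurd rfl hne) | norm_num
        rw [Finset.inter_insert_of_notMem hiS, hval, pow_succ]
        linear_combination ih'
  -- ordering facts
  have hstep : ∀ j, 1 ≤ j → j + 1 ≤ n → aplus (j+1) < aplus j := by
    intro j hj1 hjn
    by_cases hcase : j + 1 ≤ n - 1
    · rw [haplus (j+1) (by omega) hcase, haplus j (by omega) (by omega)]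
      apply max_lt
      · exact lt_of_lt_of_le (ha j (by omega)) (le_max_left _ _)
      · exact lt_of_lt_of_le (hb2 j hj1 (by omega)) (le_max_right _ _)
    · have hjn' : j + 1 = n := by omega
      rw [hjn', haplusn, haplus j (by omega) (by omega)]
      have : a n < a j := by rw [← hjn']; exact ha j (by omega)
      exact lt_of_lt_of_le this (le_max_left _ _)
  have hmono : ∀ i j, 1 ≤ i → i ≤ j → j ≤ n → aplus j ≤ aplus i := by
    intro i j hi1 hij
    induction j, hij using Nat.le_induction with
    | base => intro _; exact le_refl _
    | succ j hj ih =>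
      intro hjn
      exact le_trans (le_of_lt (hstep j (by omega) hjn)) (ih (by omega))
  have hminmax : ∀ k, 1 ≤ k → k ≤ n - 1 → aminus k ≤ aplus k := by
    intro k hk1 hk2
    rw [haminus k hk1 hk2, haplus k hk1 hk2]
    exact le_trans (min_le_left _ _) (le_max_left _ _)
  -- cardinality of S
  have hScard : S.card ≤ n - 2 := by
    have hsub : S ⊆ Finset.Icc 1 (n-1) := Finset.filter_subset _ _
    have hcard1 : S.card ≤ n - 1 := by
      have := Finset.card_le_card hsub
      rwa [Nat.card_Icc, show n - 1 + 1 - 1 = n - 1 from by omega] at this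
    have hne : S.card ≠ n - 1 := by
      intro hcard
      have hSeq : S = Finset.Icc 1 (n-1) := by
        apply Finset.eq_of_subset_of_card_le hsub
        rw [Nat.card_Icc, hcard]
        omega
      have hconst : ∀ i, 1 ≤ i → i ≤ n → s i = s 1 := by
        intro i hi1
        induction i, hi1 using Nat.le_induction with
        | base => intro _; rfl
        | succ i hi ih =>
          intro hin
          have hmem : i ∈ S := by
            rw [hSeq, Finset.mem_Icc]; omega
          have := (Finset.mem_filter.mp hmem).2
          rw [← this]
          exact ih (by omega)
      obtain ⟨p, hp⟩ := h₁
      obtain ⟨q, hq⟩ := h₂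
      have hpI : p ∈ Finset.Icc 1 n := by rw [← hunion]; exact Finset.mem_union_left _ hp
      have hqI : q ∈ Finset.Icc 1 n := by rw [← hunion]; exact Finset.mem_union_right _ hq
      rw [Finset.mem_Icc] at hpI hqI
      have e1 : s p = s 1 := hconst p hpI.1 hpI.2
      have e2 : s q = s 1 := hconst q hqI.1 hqI.2
      rw [hs1 p hp] at e1
      rw [hs2 q hq] at e2
      rw [← e1] at e2
      norm_num at e2
    omega
  -- the polynomial
  refine ⟨Polynomial.C (-(s 1)) * ∏ j ∈ S, (Polynomial.X - Polynomial.C (aplus j)),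
    ?_, ?_, ?_⟩
  · -- degree bound
    refine le_trans (Polynomial.natDegree_mul_le) ?_
    rw [Polynomial.natDegree_C, zero_add,
      Polynomial.natDegree_prod _ _ (fun j _ => Polynomial.X_sub_C_ne_zero _)]
    simp only [Polynomial.natDegree_X_sub_C]
    rw [Finset.sum_const, smul_eq_mul, mul_one]
    exact hScard
  all_goals {
    intro i hi x hx
    obtain ⟨hx1, hx2⟩ := hx
    have hiIcc : i ∈ Finset.Icc 1 n := by
      rw [← hunion]
      first
        | exact Finset.mem_union_left _ hi
        | exact Finset.mem_union_right _ hi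
    rw [Finset.mem_Icc] at hiIcc
    obtain ⟨hi1, hin⟩ := hiIcc
    set T : Finset ℕ := S ∩ Finset.Icc 1 (i-1) with hT_def
    have hTsub : T ⊆ S := Finset.inter_subset_left
    have hTneg : ∀ j ∈ T, 0 < aplus j - x := by
      intro j hj
      obtain ⟨hjS, hjIcc⟩ := Finset.mem_inter.mp hj
      rw [Finset.mem_Icc] at hjIcc
      have hjn : j ≤ n - 1 := (Finset.mem_Icc.mp (Finset.filter_subset _ _ hjS)).2
      have h1 : aminus (i-1) ≤ aplus (i-1) := hminmax (i-1) (by omega) (by omega)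
      have h2 : aplus (i-1) ≤ aplus j := hmono j (i-1) hjIcc.1 hjIcc.2 (by omega)
      linarith
    have hP1 : 0 < ∏ j ∈ T, (aplus j - x) := Finset.prod_pos hTneg
    have hP2 : 0 < ∏ j ∈ S \ T, (x - aplus j) := by
      apply Finset.prod_pos
      intro j hj
      obtain ⟨hjS, hjT⟩ := Finset.mem_sdiff.mp hj
      have hjIcc := Finset.mem_Icc.mp (Finset.filter_subset _ _ hjS)
      have hij : i ≤ j := by
        by_contra hcon
        exact hjT (Finset.mem_inter.mpr ⟨hjS, Finset.mem_Icc.mpr ⟨hjIcc.1, by omega⟩⟩)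
      have : aplus j ≤ aplus i := hmono i j hi1 hij (by omega)
      linarith
    have hTprod : ∏ j ∈ T, (x - aplus j) = (-1:ℝ)^T.card * ∏ j ∈ T, (aplus j - x) := by
      rw [← Finset.prod_const (-1:ℝ), ← Finset.prod_mul_distrib]
      exact Finset.prod_congr rfl (fun j _ => by ring)
    have hEval : Polynomial.eval x
        (Polynomial.C (-(s 1)) * ∏ j ∈ S, (Polynomial.X - Polynomial.C (aplus j)))
        = -(s 1) * ((-1:ℝ)^T.card * (∏ j ∈ T, (aplus j - x)) * ∏ j ∈ S \ T, (x - aplus j)) := by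
      rw [Polynomial.eval_mul, Polynomial.eval_C, Polynomial.eval_prod]
      simp only [Polynomial.eval_sub, Polynomial.eval_X, Polynomial.eval_C]
      rw [← Finset.prod_sdiff hTsub, hTprod]
      ring
    have hkey := key i hi1 hin
    have hfinal : (0:ℝ) < s i * ((-1:ℝ)^i * Polynomial.eval x
        (Polynomial.C (-(s 1)) * ∏ j ∈ S, (Polynomial.X - Polynomial.C (aplus j)))) := by
      have heq : s i * ((-1:ℝ)^i * Polynomial.eval x
          (Polynomial.C (-(s 1)) * ∏ j ∈ S, (Polynomial.X - Polynomial.C (aplus j))))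
          = (s 1 * s 1) * ((∏ j ∈ T, (aplus j - x)) * ∏ j ∈ S \ T, (x - aplus j)) := by
        rw [hEval]
        linear_combination (-(s 1) * (∏ j ∈ T, (aplus j - x)) * (∏ j ∈ S \ T, (x - aplus j))) * hkey
      rw [heq, hs_sq, one_mul]
      exact mul_pos hP1 hP2
    first
      | (rw [hs1 i hi, one_mul] at hfinal; exact hfinal)
      | (rw [hs2 i hi] at hfinal; linarith)
  }
end

section
/- The function λ ↦ A(λ)/√P(λ) is integrable on (a_i, a_{i−1}), the number α := 2∫_{a_i}^{a_{i−1}} A(λ)/√P(λ) dλ is a finite positive real, and there exists a C^∞ function f : ℝ → ℝ such that: a_i ≤ f(x) ≤ a_{i−1} for all x ∈ ℝ; f(x+α) = f(x) for all x; f(−x) = f(x) = f(α/2 − x) for all x; f(0) = a_i and f(α/4) = a_{i−1}; f is strictly increasing on [0, α/4]; and f'(x)² = 4·P(f(x)) / A(f(x))² for all x ∈ ℝ. -/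
open Filter Set

private lemma contDiff_top_inverse' {H u W : ℝ → ℝ}
    (hH : ∀ t, ContDiffAt ℝ (⊤ : ℕ∞) H t) (hd : ∀ t, HasDerivAt H (W t) t)
    (hW0 : ∀ t, W t ≠ 0) (hinj : Function.Injective H)
    (hHu : ∀ x, H (u x) = x) :
    ContDiff ℝ (⊤ : ℕ∞) u := by
  rw [contDiff_iff_contDiffAt]
  intro x
  set t := u x with ht
  set e : ℝ ≃L[ℝ] ℝ := ContinuousLinearEquiv.unitsEquivAut ℝ (Units.mk0 (W t) (hW0 t)) with he
  have hecoe : (e : ℝ →L[ℝ] ℝ) = ContinuousLinearMap.smulRight (1 : ℝ →L[ℝ] ℝ) (W t) := by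
    ext
    simp [he, ContinuousLinearEquiv.unitsEquivAut, mul_comm]
  have hfd : HasFDerivAt H (e : ℝ →L[ℝ] ℝ) t := by
    rw [hecoe]
    exact (hd t).hasFDerivAt
  have hv : ContDiffAt ℝ (⊤ : ℕ∞) ((hH t).localInverse hfd (by simp)) (H t) :=
    (hH t).to_localInverse hfd (by simp)
  have hev : ∀ᶠ y in nhds (H t), H (((hH t).localInverse hfd (by simp)) y) = y :=
    ((hH t).hasStrictFDerivAt' hfd (by simp)).eventually_right_inverse
  have hxt : H t = x := hHu x
  rw [hxt] at hv hev
  have heq : u =ᶠ[nhds x] ((hH t).localInverse hfd (by simp)) := by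
    filter_upwards [hev] with y hy
    exact hinj (by rw [hHu y, hy])
  exact hv.congr_of_eventuallyEq heq


/-- The polynomial `P(λ) = (−1)^i ∏_{j=0}^{n} (λ − a_j)`. -/
noncomputable def Ppoly (n i : ℕ) (a : ℕ → ℝ) (x : ℝ) : ℝ :=
  (-1 : ℝ) ^ i * ∏ j ∈ Finset.range (n + 1), (x - a j)

set_option maxHeartbeats 2000000 in
/-- construction of the coordinate functions `f_i` in §2.  The
function `λ ↦ A(λ)/√P(λ)` is integrable on `(a_i, a_{i−1})`, the period
`α = 2∫_{a_i}^{a_{i−1}} A(λ)/√P(λ) dλ` is positive, and there is a `C^∞` function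
`f : ℝ → ℝ` with range in `[a_i, a_{i−1}]`, `α`-periodic, satisfying the symmetries
`f(−x) = f(x) = f(α/2 − x)`, `f(0) = a_i`, `f(α/4) = a_{i−1}`, strictly increasing on
`[0, α/4]`, and solving `f'(x)² = 4·P(f(x))/A(f(x))²`. -/
theorem stmt_10 (n : ℕ) (hn : 2 ≤ n) (i : ℕ) (hi : 1 ≤ i) (hi2 : i ≤ n)
    (a : ℕ → ℝ) (ha : ∀ j < n, a (j + 1) < a j) (han : 0 < a n)
    (A : ℝ → ℝ) (hA : ContDiff ℝ (⊤ : ℕ∞) A)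
    (hApos : ∀ x ∈ Set.Icc (a i) (a (i - 1)), 0 < A x) :
    MeasureTheory.IntegrableOn (fun x => A x / Real.sqrt (Ppoly n i a x))
      (Set.Ioo (a i) (a (i - 1))) ∧
    ∃ α : ℝ, α = 2 * ∫ x in (a i)..(a (i - 1)), A x / Real.sqrt (Ppoly n i a x) ∧
      0 < α ∧
      ∃ f : ℝ → ℝ, ContDiff ℝ (⊤ : ℕ∞) f ∧
        (∀ x, f x ∈ Set.Icc (a i) (a (i - 1))) ∧
        (∀ x, f (x + α) = f x) ∧
        (∀ x, f (-x) = f x ∧ f x = f (α / 2 - x)) ∧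
        f 0 = a i ∧ f (α / 4) = a (i - 1) ∧
        StrictMonoOn f (Set.Icc 0 (α / 4)) ∧
        ∀ x, (deriv f x) ^ 2 = 4 * Ppoly n i a (f x) / (A (f x)) ^ 2 := by
  classical
  obtain ⟨k, rfl⟩ : ∃ k, i = k + 1 := ⟨i - 1, (Nat.succ_pred_eq_of_pos hi).symm⟩
  simp only [Nat.add_sub_cancel] at hApos ⊢
  set b := a (k + 1) with hbdef
  set c := a k with hcdef
  have hkn : k < n := lt_of_lt_of_le (Nat.lt_succ_self k) hi2
  have hbc : b < c := ha k hkn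
  have hcb : (0:ℝ) < c - b := sub_pos.mpr hbc
  -- strict antitonicity of a
  have hstrict : ∀ p q : ℕ, p < q → q ≤ n → a q < a p := by
    intro p q
    induction q with
    | zero => omega
    | succ m ih =>
      intro hpq hqn
      rcases Nat.lt_succ_iff_lt_or_eq.mp hpq with h | h
      · exact lt_trans (ha m (by omega)) (ih h (by omega))
      · subst h; exact ha p (by omega)
  -- the factor R
  set S : Finset ℕ := ((Finset.range (n + 1)).erase k).erase (k + 1) with hSdef
  set R : ℝ → ℝ := fun x => (-1 : ℝ) ^ k * ∏ j ∈ S, (x - a j) with hRdef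
  have hkmem : k ∈ Finset.range (n + 1) := Finset.mem_range.mpr (by omega)
  have hk1mem : k + 1 ∈ (Finset.range (n + 1)).erase k :=
    Finset.mem_erase.mpr ⟨by omega, Finset.mem_range.mpr (by omega)⟩
  have hPR : ∀ x, Ppoly n (k + 1) a x = (x - b) * (c - x) * R x := by
    intro x
    unfold Ppoly
    rw [← Finset.mul_prod_erase _ _ hkmem, ← Finset.mul_prod_erase _ _ hk1mem]
    simp only [hRdef, hSdef]
    rw [pow_succ]
    ring
  have hSeq : S = Finset.range k ∪ Finset.Ico (k + 2) (n + 1) := by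
    ext j
    simp only [hSdef, Finset.mem_erase, Finset.mem_range, Finset.mem_union, Finset.mem_Ico]
    omega
  have hRpos : ∀ x ∈ Set.Icc b c, 0 < R x := by
    intro x hx
    have hdisj : Disjoint (Finset.range k) (Finset.Ico (k + 2) (n + 1)) := by
      rw [Finset.disjoint_left]
      intro j hj hj'
      rw [Finset.mem_range] at hj
      rw [Finset.mem_Ico] at hj'
      omega
    have hsplit : (∏ j ∈ S, (x - a j)) =
        (∏ j ∈ Finset.range k, (x - a j)) * ∏ j ∈ Finset.Ico (k + 2) (n + 1), (x - a j) := by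
      rw [hSeq, Finset.prod_union hdisj]
    have h1 : (∏ j ∈ Finset.range k, (x - a j))
        = (-1 : ℝ) ^ k * ∏ j ∈ Finset.range k, (a j - x) := by
      calc ∏ j ∈ Finset.range k, (x - a j)
          = ∏ j ∈ Finset.range k, (-1 : ℝ) * (a j - x) := by
            apply Finset.prod_congr rfl; intros; ring
        _ = (∏ _j ∈ Finset.range k, (-1:ℝ)) * ∏ j ∈ Finset.range k, (a j - x) :=
            Finset.prod_mul_distrib
        _ = (-1:ℝ)^k * ∏ j ∈ Finset.range k, (a j - x) := by
            rw [Finset.prod_const, Finset.card_range]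
    have hpos1 : 0 < ∏ j ∈ Finset.range k, (a j - x) := by
      apply Finset.prod_pos
      intro j hj
      have h2 : a k < a j := hstrict j k (Finset.mem_range.mp hj) (by omega)
      have h3 := hx.2
      simp only [← hcdef] at h2
      linarith
    have hpos2 : 0 < ∏ j ∈ Finset.Ico (k + 2) (n + 1), (x - a j) := by
      apply Finset.prod_pos
      intro j hj
      rw [Finset.mem_Ico] at hj
      have h2 : a j < a (k + 1) := hstrict (k + 1) j (by omega) (by omega)
      have h3 := hx.1
      simp only [← hbdef] at h2
      linarith
    have hone : (-1:ℝ)^k * (-1:ℝ)^k = 1 := by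
      rw [← mul_pow]; norm_num
    have hRx : R x = (∏ j ∈ Finset.range k, (a j - x)) *
        ∏ j ∈ Finset.Ico (k + 2) (n + 1), (x - a j) := by
      simp only [hRdef]
      rw [hsplit, h1]
      linear_combination ((∏ j ∈ Finset.range k, (a j - x)) *
        ∏ j ∈ Finset.Ico (k + 2) (n + 1), (x - a j)) * hone
    rw [hRx]
    exact mul_pos hpos1 hpos2
  have hRsmooth : ContDiff ℝ (⊤ : ℕ∞) R := by
    have hprod : ∀ T : Finset ℕ, ContDiff ℝ (⊤ : ℕ∞) (fun x : ℝ => ∏ j ∈ T, (x - a j)) := by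
      intro T
      induction T using Finset.induction with
      | empty => simpa using contDiff_const
      | insert _ _ hj ih =>
        simp only [Finset.prod_insert hj]
        exact (contDiff_id.sub contDiff_const).mul ih
    exact contDiff_const.mul (hprod S)
  -- the function g
  set g : ℝ → ℝ := fun t => b + (c - b) * Real.sin t ^ 2 with hgdef
  have hgsmooth : ContDiff ℝ (⊤ : ℕ∞) g :=
    contDiff_const.add (contDiff_const.mul (Real.contDiff_sin.pow 2))
  have hgmem : ∀ t, g t ∈ Set.Icc b c := by
    intro t
    have h1 : 0 ≤ Real.sin t ^ 2 := sq_nonneg _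
    have h2 : Real.sin t ^ 2 ≤ 1 := Real.sin_sq_le_one t
    constructor
    · simp only [hgdef]; nlinarith
    · simp only [hgdef]; nlinarith
  have geven : ∀ t, g (-t) = g t := by
    intro t
    simp only [hgdef, Real.sin_neg]
    ring
  have gpisub : ∀ t, g (Real.pi - t) = g t := by
    intro t
    simp only [hgdef, Real.sin_pi_sub]
  have gper : ∀ t, g (t + Real.pi) = g t := by
    intro t
    simp only [hgdef, Real.sin_add_pi]
    ring
  -- W
  set W : ℝ → ℝ := fun t => A (g t) / Real.sqrt (R (g t)) with hWdef
  have hWpos : ∀ t, 0 < W t := fun t =>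
    div_pos (hApos _ (hgmem t)) (Real.sqrt_pos.mpr (hRpos _ (hgmem t)))
  have hWsmooth : ContDiff ℝ (⊤ : ℕ∞) W := by
    rw [contDiff_iff_contDiffAt]
    intro t
    exact ((hA.contDiffAt).comp t hgsmooth.contDiffAt).div
      (((Real.contDiffAt_sqrt (ne_of_gt (hRpos _ (hgmem t)))).comp t
        (hRsmooth.comp hgsmooth).contDiffAt))
      (ne_of_gt (Real.sqrt_pos.mpr (hRpos _ (hgmem t))))
  have hWcont : Continuous W := hWsmooth.continuous
  have hWeven : ∀ t, W (-t) = W t := by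
    intro t; simp only [hWdef, geven]
  have hWpisub : ∀ t, W (Real.pi - t) = W t := by
    intro t; simp only [hWdef, gpisub]
  have hWper : ∀ t, W (t + Real.pi) = W t := by
    intro t; simp only [hWdef, gper]
  -- H
  set H : ℝ → ℝ := fun s => ∫ τ in (0:ℝ)..s, W τ with hHdef
  have hWint : ∀ p q : ℝ, IntervalIntegrable W MeasureTheory.volume p q :=
    fun p q => hWcont.intervalIntegrable p q
  have hH' : ∀ s, HasDerivAt H (W s) s := fun s =>
    intervalIntegral.integral_hasDerivAt_right (hWint 0 s)
      (hWcont.stronglyMeasurableAtFilter _ _) hWcont.continuousAt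
  have hHsmoothAt : ∀ s, ContDiffAt ℝ (⊤ : ℕ∞) H s := fun s =>
    (contDiff_infty_iff_deriv.mpr ⟨fun s => (hH' s).differentiableAt, by
      have hdH : deriv H = W := funext fun s => (hH' s).deriv
      rw [hdH]; exact hWsmooth⟩).contDiffAt
  have hHdiffble : Differentiable ℝ H := fun s => (hH' s).differentiableAt
  have hHcont : Continuous H := hHdiffble.continuous
  have hHmono : StrictMono H := strictMono_of_deriv_pos fun s => by
    rw [(hH' s).deriv]; exact hWpos s
  have H0 : H 0 = 0 := intervalIntegral.integral_same
  -- lower bound m for W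
  have hφcont : ContinuousOn (fun x => A x / Real.sqrt (R x)) (Set.Icc b c) := by
    apply ContinuousOn.div (hA.continuous.continuousOn)
      ((Real.continuous_sqrt.comp hRsmooth.continuous).continuousOn)
    intro x hx
    exact ne_of_gt (Real.sqrt_pos.mpr (hRpos x hx))
  obtain ⟨x₀, hx₀mem, hx₀min⟩ := isCompact_Icc.exists_isMinOn
    (Set.nonempty_Icc.mpr hbc.le) hφcont
  set m : ℝ := A x₀ / Real.sqrt (R x₀) with hmdef
  have hmpos : 0 < m := div_pos (hApos _ hx₀mem) (Real.sqrt_pos.mpr (hRpos _ hx₀mem))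
  have hmW : ∀ t, m ≤ W t := fun t => (isMinOn_iff.mp hx₀min) (g t) (hgmem t)
  -- H additivity
  have hHadd : ∀ p q : ℝ, ∫ τ in p..q, W τ = H q - H p := by
    intro p q
    have h := intervalIntegral.integral_add_adjacent_intervals (hWint 0 p) (hWint p q)
    simp only [hHdef]
    linarith
  -- surjectivity of H
  have hHtop : Tendsto H atTop atTop := by
    apply tendsto_atTop_mono' atTop (
      Filter.eventually_atTop.mpr ⟨0, fun s hs => ?_⟩)
    · exact (tendsto_id.const_mul_atTop hmpos)
    · have h1 : ∫ τ in (0:ℝ)..s, m ≤ ∫ τ in (0:ℝ)..s, W τ :=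
        intervalIntegral.integral_mono_on hs intervalIntegrable_const (hWint 0 s)
          (fun x _ => hmW x)
      simp only [intervalIntegral.integral_const, smul_eq_mul, sub_zero] at h1
      simp only [hHdef, id_eq]
      calc m * s = (s - 0) * m := by ring
        _ ≤ _ := by simpa using h1
  have hHbot : Tendsto H atBot atBot := by
    apply tendsto_atBot_mono' atBot (
      Filter.eventually_atBot.mpr ⟨0, fun s hs => ?_⟩)
    · exact (tendsto_id.const_mul_atBot hmpos)
    · have h1 : ∫ τ in s..(0:ℝ), m ≤ ∫ τ in s..(0:ℝ), W τ :=
        intervalIntegral.integral_mono_on hs intervalIntegrable_const (hWint s 0)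
          (fun x _ => hmW x)
      rw [hHadd s 0, H0] at h1
      simp only [intervalIntegral.integral_const, smul_eq_mul] at h1
      have h2 : (0 - s) * m ≤ 0 - H s := h1
      simp only [id_eq]
      linarith [h2]
  have hHsurj : Function.Surjective H := hHcont.surjective hHtop hHbot
  -- the inverse u
  set E := StrictMono.orderIsoOfSurjective H hHmono hHsurj with hEdef
  set u : ℝ → ℝ := fun x => E.symm x with hudef
  have hHu : ∀ x, H (u x) = x := by
    intro x
    have h := E.apply_symm_apply x
    rwa [hEdef, StrictMono.coe_orderIsoOfSurjective] at h
  have huH : ∀ s, u (H s) = s := fun s => hHmono.injective (hHu (H s))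
  have hucont : Continuous u := (OrderIso.continuous E.symm)
  have husmooth : ContDiff ℝ (⊤ : ℕ∞) u :=
    contDiff_top_inverse' hHsmoothAt hH' (fun t => ne_of_gt (hWpos t)) hHmono.injective hHu
  have hu' : ∀ x, HasDerivAt u (W (u x))⁻¹ x := fun x =>
    HasDerivAt.of_local_left_inverse hucont.continuousAt (hH' (u x))
      (ne_of_gt (hWpos _)) (Filter.Eventually.of_forall hHu)
  have humono : StrictMono u := (E.symm).strictMono
  have hu0 : u 0 = 0 := by
    have h := huH 0
    rwa [H0] at h
  -- symmetries of H
  have Hneg : ∀ s, H (-s) = - H s := by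
    intro s
    have h1 : ∫ τ in (0:ℝ)..s, W (-τ) = ∫ τ in (-s)..(0:ℝ), W τ := by
      simpa using intervalIntegral.integral_comp_neg (a := (0:ℝ)) (b := s) W
    have h2 : ∫ τ in (0:ℝ)..s, W (-τ) = H s := by
      simp only [hWeven, hHdef]
    rw [h2, hHadd (-s) 0, H0] at h1
    linarith
  have Hpisub : ∀ s, H (Real.pi - s) = H Real.pi - H s := by
    intro s
    have h1 : ∫ τ in (0:ℝ)..s, W (Real.pi - τ)
        = ∫ τ in (Real.pi - s)..(Real.pi - 0), W τ :=
      intervalIntegral.integral_comp_sub_left W Real.pi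
    have h2 : ∫ τ in (0:ℝ)..s, W (Real.pi - τ) = H s := by
      simp only [hWpisub, hHdef]
    rw [h2, sub_zero, hHadd (Real.pi - s) Real.pi] at h1
    linarith
  have Hper : ∀ s, H (s + Real.pi) = H s + H Real.pi := by
    intro s
    have hper : Function.Periodic W Real.pi := hWper
    have h1 := hper.intervalIntegral_add_eq s 0
    rw [zero_add, hHadd s (s + Real.pi), hHadd 0 Real.pi, H0] at h1
    linarith
  have Hpi2 : H Real.pi = 2 * H (Real.pi / 2) := by
    have h := Hpisub (Real.pi / 2)
    have h2 : Real.pi - Real.pi / 2 = Real.pi / 2 := by ring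
    rw [h2] at h
    linarith
  have Hq_pos : 0 < H (Real.pi / 2) := by
    have := hHmono (show (0:ℝ) < Real.pi / 2 by positivity)
    rwa [H0] at this
  -- the primitive Φ
  set w : ℝ → ℝ := fun x => Real.arcsin (Real.sqrt ((x - b) / (c - b))) with hwdef
  set Φ : ℝ → ℝ := fun x => 2 * H (w x) with hΦdef
  have hΦcont : Continuous Φ := by
    apply continuous_const.mul
    apply hHcont.comp
    apply Real.continuous_arcsin.comp
    apply Real.continuous_sqrt.comp
    exact (continuous_id.sub continuous_const).div_const (c - b)
  have hgw : ∀ x ∈ Set.Icc b c, g (w x) = x := by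
    intro x hx
    have ht0 : 0 ≤ (x - b) / (c - b) := div_nonneg (by linarith [hx.1]) hcb.le
    have ht1 : (x - b) / (c - b) ≤ 1 := by
      rw [div_le_one hcb]; linarith [hx.2]
    have hs1 : Real.sqrt ((x - b) / (c - b)) ≤ 1 := Real.sqrt_le_one.mpr ht1
    have hsin : Real.sin (w x) = Real.sqrt ((x - b) / (c - b)) :=
      Real.sin_arcsin (by linarith [Real.sqrt_nonneg ((x - b)/(c - b))]) hs1
    simp only [hgdef, hwdef] at hsin ⊢
    rw [hsin, Real.sq_sqrt ht0]
    field_simp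
    ring
  have hΦderiv : ∀ x ∈ Set.Ioo b c,
      HasDerivAt Φ (A x / Real.sqrt (Ppoly n (k+1) a x)) x := by
    intro x hx
    have hxb : (0:ℝ) < x - b := sub_pos.mpr hx.1
    have hcx : (0:ℝ) < c - x := sub_pos.mpr hx.2
    set t : ℝ := (x - b) / (c - b) with htdef
    have ht0 : 0 < t := div_pos hxb hcb
    have ht1 : t < 1 := by rw [htdef, div_lt_one hcb]; linarith
    have hs0 : 0 < Real.sqrt t := Real.sqrt_pos.mpr ht0
    have hs1 : Real.sqrt t < 1 := by
      rw [show (1:ℝ) = Real.sqrt 1 from Real.sqrt_one.symm]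
      exact Real.sqrt_lt_sqrt ht0.le ht1
    have hd1 : HasDerivAt (fun y : ℝ => (y - b) / (c - b)) ((c - b)⁻¹) x := by
      have := ((hasDerivAt_id x).sub_const b).div_const (c - b)
      simpa using this
    have hd2 : HasDerivAt Real.sqrt (1 / (2 * Real.sqrt t)) t := by
      simpa using Real.hasDerivAt_sqrt (ne_of_gt ht0)
    have hd3 : HasDerivAt Real.arcsin (1 / Real.sqrt (1 - Real.sqrt t ^ 2)) (Real.sqrt t) :=
      Real.hasDerivAt_arcsin (by linarith) (ne_of_lt hs1)
    have hcomp1 : HasDerivAt (fun y : ℝ => Real.sqrt ((y - b) / (c - b)))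
        (1 / (2 * Real.sqrt t) * (c - b)⁻¹) x := by
      exact hd2.comp x hd1
    have hcomp2 : HasDerivAt (fun y : ℝ => Real.arcsin (Real.sqrt ((y - b) / (c - b))))
        (1 / Real.sqrt (1 - Real.sqrt t ^ 2) * (1 / (2 * Real.sqrt t) * (c - b)⁻¹)) x :=
      by simpa [Function.comp_def] using hd3.comp x hcomp1
    have hcomp3 : HasDerivAt (fun y : ℝ => H (w y))
        (W (w x) * (1 / Real.sqrt (1 - Real.sqrt t ^ 2) * (1 / (2 * Real.sqrt t) * (c - b)⁻¹))) x :=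
      (hH' (w x)).comp x hcomp2
    have hΦd : HasDerivAt Φ
        (2 * (W (w x) * (1 / Real.sqrt (1 - Real.sqrt t ^ 2) * (1 / (2 * Real.sqrt t) * (c - b)⁻¹)))) x :=
      hcomp3.const_mul 2
    convert hΦd using 1
    -- now the value computation
    have hxmem : x ∈ Set.Icc b c := ⟨hx.1.le, hx.2.le⟩
    have hWwx : W (w x) = A x / Real.sqrt (R x) := by
      simp only [hWdef]
      rw [hgw x hxmem]
    have hsq : Real.sqrt t ^ 2 = t := Real.sq_sqrt ht0.le
    have h1t : 1 - t = (c - x) / (c - b) := by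
      rw [htdef]; field_simp
      ring
    have hsqt : Real.sqrt t = Real.sqrt (x - b) / Real.sqrt (c - b) := by
      rw [htdef, Real.sqrt_div hxb.le]
    have hsq1t : Real.sqrt (1 - t) = Real.sqrt (c - x) / Real.sqrt (c - b) := by
      rw [h1t, Real.sqrt_div hcx.le]
    have hP : Real.sqrt (Ppoly n (k+1) a x)
        = Real.sqrt (x - b) * (Real.sqrt (c - x) * Real.sqrt (R x)) := by
      rw [hPR x, mul_assoc, Real.sqrt_mul hxb.le, Real.sqrt_mul hcx.le]
    have hsb : 0 < Real.sqrt (x - b) := Real.sqrt_pos.mpr hxb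
    have hsc : 0 < Real.sqrt (c - x) := Real.sqrt_pos.mpr hcx
    have hsr : 0 < Real.sqrt (R x) := Real.sqrt_pos.mpr (hRpos x hxmem)
    have hscb : 0 < Real.sqrt (c - b) := Real.sqrt_pos.mpr hcb
    have hscb2 : Real.sqrt (c - b) ^ 2 = c - b := Real.sq_sqrt hcb.le
    rw [hP, hWwx, hsq, hsq1t, hsqt]
    have hA0 : A x ≠ 0 := ne_of_gt (hApos x hxmem)
    field_simp
    nlinarith [hscb2, mul_pos hsb hsc, mul_pos hsr hscb, sq_nonneg (Real.sqrt (c-b))]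
  -- integrability
  have hnonneg : ∀ x ∈ Set.Ioo b c, 0 ≤ A x / Real.sqrt (Ppoly n (k+1) a x) := by
    intro x hx
    exact div_nonneg (hApos x ⟨hx.1.le, hx.2.le⟩).le (Real.sqrt_nonneg _)
  have hint : MeasureTheory.IntegrableOn (fun x => A x / Real.sqrt (Ppoly n (k+1) a x))
      (Set.Ioo b c) := by
    have h := intervalIntegral.integrableOn_deriv_of_nonneg hΦcont.continuousOn hΦderiv hnonneg
    exact (integrableOn_Ioc_iff_integrableOn_Ioo).mp h
  have hII : IntervalIntegrable (fun x => A x / Real.sqrt (Ppoly n (k+1) a x))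
      MeasureTheory.volume b c :=
    (intervalIntegrable_iff_integrableOn_Ioo_of_le hbc.le).mpr hint
  have hwb : w b = 0 := by
    simp only [hwdef, sub_self, zero_div, Real.sqrt_zero, Real.arcsin_zero]
  have hwc : w c = Real.pi / 2 := by
    simp only [hwdef]
    rw [div_self (ne_of_gt hcb), Real.sqrt_one, Real.arcsin_one]
  have hval : ∫ x in b..c, A x / Real.sqrt (Ppoly n (k+1) a x) = 2 * H (Real.pi / 2) := by
    have h := intervalIntegral.integral_eq_sub_of_hasDeriv_right_of_le hbc.le
      hΦcont.continuousOn
      (fun x hx => (hΦderiv x hx).hasDerivWithinAt) hII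
    rw [h]
    simp only [hΦdef, hwb, hwc, H0]
    ring
  refine ⟨hint, 2 * ∫ x in b..c, A x / Real.sqrt (Ppoly n (k+1) a x), rfl, ?_, ?_⟩
  · rw [hval]; positivity
  -- the function f
  set α : ℝ := 2 * ∫ x in b..c, A x / Real.sqrt (Ppoly n (k+1) a x) with hαdef
  have hα4 : α = 4 * H (Real.pi / 2) := by rw [hαdef, hval]; ring
  have hαq : α / 4 = H (Real.pi / 2) := by rw [hα4]; ring
  -- symmetries of u
  have uadd : ∀ x, u (x + α / 2) = u x + Real.pi := by
    intro x
    apply hHmono.injective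
    rw [hHu, Hper, hHu, Hpi2, hα4]
    ring
  have uneg : ∀ x, u (-x) = - u x := by
    intro x
    apply hHmono.injective
    rw [hHu, Hneg, hHu]
  have usub : ∀ x, u (α / 2 - x) = Real.pi - u x := by
    intro x
    apply hHmono.injective
    rw [hHu, Hpisub, hHu, Hpi2, hα4]
    ring
  have uq : u (α / 4) = Real.pi / 2 := by
    rw [hαq]
    exact huH _
  set f : ℝ → ℝ := fun x => g (u x) with hfdef
  have hfval : ∀ x, f x = b + (c - b) * Real.sin (u x) ^ 2 := fun x => rfl
  refine ⟨f, hgsmooth.comp husmooth, fun x => hgmem (u x), ?_, ?_, ?_, ?_, ?_, ?_⟩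
  · -- periodicity
    intro x
    have h1 : x + α = (x + α / 2) + α / 2 := by ring
    simp only [hfdef]
    rw [h1, uadd, uadd, gper, gper]
  · -- symmetries
    intro x
    constructor
    · simp only [hfdef]; rw [uneg, ← geven (u x)]
    · simp only [hfdef]; rw [usub, gpisub]
  · -- f 0 = b
    simp only [hfdef]
    rw [hu0]
    simp only [hgdef, Real.sin_zero]
    ring
  · -- f (α/4) = c
    simp only [hfdef]
    rw [uq]
    simp only [hgdef, Real.sin_pi_div_two]
    ring
  · -- strict monotonicity
    intro x hx y hy hxy
    have hux0 : 0 ≤ u x := by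
      have := humono.monotone hx.1
      rwa [hu0] at this
    have huyq : u y ≤ Real.pi / 2 := by
      have := humono.monotone hy.2
      rwa [uq] at this
    have huxy : u x < u y := humono hxy
    have hmemx : u x ∈ Set.Icc (-(Real.pi/2)) (Real.pi/2) :=
      ⟨by linarith [Real.pi_pos], by linarith⟩
    have hmemy : u y ∈ Set.Icc (-(Real.pi/2)) (Real.pi/2) :=
      ⟨by linarith [Real.pi_pos], huyq⟩
    have h1 : Real.sin (u x) < Real.sin (u y) := Real.strictMonoOn_sin hmemx hmemy huxy
    have h2 : 0 ≤ Real.sin (u x) :=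
      Real.sin_nonneg_of_nonneg_of_le_pi hux0 (by linarith [Real.pi_pos])
    have h3 : Real.sin (u x) ^ 2 < Real.sin (u y) ^ 2 :=
      pow_lt_pow_left₀ h1 h2 two_ne_zero
    simp only [hfdef, hgdef]
    nlinarith
  · -- the ODE
    intro x
    have h1 : HasDerivAt (fun y : ℝ => Real.sin (u y) ^ 2)
        ((2:ℕ) * Real.sin (u x) ^ (2-1) * Real.cos (u x) * (W (u x))⁻¹) x :=
      (((Real.hasDerivAt_sin (u x)).pow 2).comp x (hu' x))
    have h2 : HasDerivAt f
        ((c - b) * ((2:ℕ) * Real.sin (u x) ^ (2-1) * Real.cos (u x) * (W (u x))⁻¹)) x :=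
      ((h1.const_mul (c - b)).const_add b)
    rw [h2.deriv]
    have hfxmem : f x ∈ Set.Icc b c := hgmem (u x)
    have hA0 : A (f x) ≠ 0 := ne_of_gt (hApos _ hfxmem)
    have hR0 : 0 < R (f x) := hRpos _ hfxmem
    have hsr : 0 < Real.sqrt (R (f x)) := Real.sqrt_pos.mpr hR0
    have hsr2 : Real.sqrt (R (f x)) ^ 2 = R (f x) := Real.sq_sqrt hR0.le
    have hWux : W (u x) = A (f x) / Real.sqrt (R (f x)) := rfl
    have hfb : f x - b = (c - b) * Real.sin (u x) ^ 2 := by rw [hfval]; ring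
    have hcf : c - f x = (c - b) * Real.cos (u x) ^ 2 := by
      rw [hfval]
      have := Real.sin_sq_add_cos_sq (u x)
      nlinarith
    rw [hPR (f x), hWux]
    rw [hfb, hcf]
    norm_num only [pow_one]
    field_simp
    nlinarith [hsr2, Real.sin_sq_add_cos_sq (u x), sq_nonneg (Real.sin (u x) * Real.cos (u x)),
      sq_nonneg (Real.sin (u x)), sq_nonneg (Real.cos (u x))]
end

section
/- For every real λ ∉ {a_0, …, a_n}: ∑_{i=0}^{n} v_i/(a_i − λ) − 1 = λ · ∏_{k=1}^{n}(λ_k − λ) / ∏_{i=0}^{n}(a_i − λ). -/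
/-!
If `p` and the nodal polynomial `N = ∏ (X - b_i)` are both monic of degree `n + 1`, then
`p - N` has degree at most `n`, so it equals its Lagrange interpolant at the nodes `b_i`, where
it takes the values `p(b_i)`. Evaluating at `y` gives the partial fraction decomposition
`p(y) / N(y) - 1 = ∑ p(b_i) / (N'(b_i) (y - b_i))`. The identity is this decomposition for
`p = X ∏ (X + λ_k)`, nodes `b_i = -a_i` and `y = -λ`; this sign change turns `v_i` into
`-p(b_i) / N'(b_i)` with no `(-1)^n` factors.
-/

open Polynomial Finset Lagrange

theorem Lagrange.sum_nodalWeight_mul_eval_div_sub {F ι : Type*} [Field F] [DecidableEq ι]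
    {s : Finset ι} {v : ι → F} (hvs : Set.InjOn v s) {p : F[X]} (hp : p.Monic)
    (hdeg : p.natDegree = #s) {x : F} (hx : ∀ i ∈ s, x ≠ v i) :
    ∑ i ∈ s, nodalWeight s v i * p.eval (v i) / (x - v i) =
      p.eval x / (nodal s v).eval x - 1 := by
  have hp_deg : p.degree = #s := by rw [degree_eq_natDegree hp.ne_zero, hdeg]
  have hlt : (p - nodal s v).degree < #s := hp_deg ▸ degree_sub_lt_left
    (hp_deg.trans degree_nodal.symm) hp.ne_zero (by rw [hp.leadingCoeff, nodal_monic.leadingCoeff])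
  have hinterp := congrArg (eval x) (eq_interpolate hvs hlt)
  rw [eval_interpolate_not_at_node _ hx, eval_sub] at hinterp
  have hN : (nodal s v).eval x ≠ 0 := eval_nodal_not_at_node hx
  calc ∑ i ∈ s, nodalWeight s v i * p.eval (v i) / (x - v i)
      = ∑ i ∈ s, nodalWeight s v i * (x - v i)⁻¹ * (p - nodal s v).eval (v i) :=
        sum_congr rfl fun i hi => by rw [eval_sub, eval_nodal_at_node hi, sub_zero]; ring
    _ = (p.eval x - (nodal s v).eval x) / (nodal s v).eval x := by
        rw [hinterp, mul_div_cancel_left₀ _ hN]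
    _ = p.eval x / (nodal s v).eval x - 1 := by rw [sub_div, div_self hN]

theorem stmt_11_general (n : ℕ) (a : ℕ → ℝ)
    (ha : ∀ i ≤ n, ∀ j ≤ n, i ≠ j → a i ≠ a j)
    (lam : ℕ → ℝ) (v : ℕ → ℝ)
    (hv : ∀ i ≤ n, v i = a i * (∏ k ∈ Finset.Icc 1 n, (lam k - a i)) /
      ∏ j ∈ (Finset.range (n + 1)).erase i, (a j - a i))
    (x : ℝ) (hx : ∀ i ≤ n, x ≠ a i) :
    ∑ i ∈ Finset.range (n + 1), v i / (a i - x) - 1 =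
      x * (∏ k ∈ Finset.Icc 1 n, (lam k - x)) /
        ∏ i ∈ Finset.range (n + 1), (a i - x) := by
  set p : ℝ[X] := X * ∏ k ∈ Icc 1 n, (X + C (lam k))
  have hp : p.Monic := monic_X.mul (monic_prod_of_monic _ _ fun k _ => monic_X_add_C _)
  have hp_deg : p.natDegree = #(range (n + 1)) := by
    rw [monic_X.natDegree_mul (monic_prod_of_monic _ _ fun k _ => monic_X_add_C _),
      natDegree_prod_of_monic _ _ fun k _ => monic_X_add_C _]
    simp [add_comm]
  have hinj : Set.InjOn (fun i => -a i) (range (n + 1)) := fun i hi j hj hij => by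
    by_contra h
    exact ha i (mem_range_succ_iff.1 hi) j (mem_range_succ_iff.1 hj) h (neg_inj.1 hij)
  have hx' : ∀ i ∈ range (n + 1), -x ≠ -a i := fun i hi => by
    simpa using hx i (mem_range_succ_iff.1 hi)
  have hterm : ∀ i ∈ range (n + 1), nodalWeight (range (n + 1)) (fun i => -a i) i *
      p.eval (-a i) / (-x - -a i) = -(v i / (a i - x)) := fun i hi => by
    simp only [p, nodalWeight, prod_inv_distrib, neg_sub_neg, eval_mul, eval_X, eval_prod,
      eval_add, eval_C, neg_add_eq_sub, hv i (mem_range_succ_iff.1 hi)]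
    ring
  have hp_div_nodal : p.eval (-x) / (nodal (range (n + 1)) fun i => -a i).eval (-x) =
      -(x * (∏ k ∈ Icc 1 n, (lam k - x)) / ∏ i ∈ range (n + 1), (a i - x)) := by
    simp only [p, eval_nodal, neg_sub_neg, eval_mul, eval_X, eval_prod, eval_add, eval_C,
      neg_add_eq_sub]
    ring
  have key := sum_nodalWeight_mul_eval_div_sub hinj hp hp_deg hx'
  rw [sum_congr rfl hterm, sum_neg_distrib, hp_div_nodal] at key
  linarith

/-- defining identity of the elliptic coordinates.  With
`v_i = a_i·∏_{k=1}^{n}(λ_k−a_i)/∏_{j≠i}(a_j−a_i)`, for every `λ ∉ {a_0,…,a_n}`: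
`∑_{i=0}^{n} v_i/(a_i−λ) − 1 = λ·∏_{k=1}^{n}(λ_k−λ)/∏_{i=0}^{n}(a_i−λ)`. -/
theorem stmt_11 (n : ℕ) (hn : 1 ≤ n) (a : ℕ → ℝ)
    (ha : ∀ i ≤ n, ∀ j ≤ n, i ≠ j → a i ≠ a j)
    (lam : ℕ → ℝ) (v : ℕ → ℝ)
    (hv : ∀ i ≤ n, v i = a i * (∏ k ∈ Finset.Icc 1 n, (lam k - a i)) /
      ∏ j ∈ (Finset.range (n + 1)).erase i, (a j - a i))
    (x : ℝ) (hx : ∀ i ≤ n, x ≠ a i) :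
    ∑ i ∈ Finset.range (n + 1), v i / (a i - x) - 1 =
      x * (∏ k ∈ Finset.Icc 1 n, (lam k - x)) /
        ∏ i ∈ Finset.range (n + 1), (a i - x) :=
  stmt_11_general n a ha lam v hv x hx
end

section
/- If moreover a_0 > a_1 > ⋯ > a_n > 0 and a_k ≤ λ_k ≤ a_{k−1} for 1 ≤ k ≤ n, then v_i ≥ 0 for every 0 ≤ i ≤ n and ∑_{i=0}^{n} v_i/a_i = 1; in particular the point u = (√v_0, …, √v_n) ∈ ℝ^{n+1} lies on the ellipsoid ∑_{i=0}^{n} u_i²/a_i = 1. -/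
/-! The numbers `v i / a i` are the values at the nodes `a i` of the monic polynomial
`∏ k, (X - λ k)` of degree `n`, divided by the Lagrange denominators `∏ j ≠ i, (a i - a j)`;
their sum is therefore the leading coefficient `1` of that polynomial. For the signs, pair the
factor `λ k - a i` of the numerator with `a (k - 1) - a i` when `k ≤ i` and with `a k - a i`
when `k > i`: interlacing makes every such ratio nonnegative. -/

open Finset Polynomial

theorem prod_sub_swap {ι R : Type*} [CommRing R] (s : Finset ι) (f : ι → R) (c : R) :
    ∏ k ∈ s, (f k - c) = (-1) ^ #s * ∏ k ∈ s, (c - f k) := by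
  rw [← prod_neg]
  simp_rw [neg_sub]

theorem Lagrange.sum_prod_sub_div_prod_sub_eq_one {ι κ F : Type*} [Field F] [DecidableEq ι]
    {s : Finset ι} {x : ι → F} (hx : Set.InjOn x s) (t : Finset κ) (μ : κ → F)
    (hst : #s = #t + 1) :
    ∑ i ∈ s, (∏ k ∈ t, (μ k - x i)) / ∏ j ∈ s.erase i, (x j - x i) = 1 := by
  set P : F[X] := ∏ k ∈ t, (X - C (μ k))
  have hdeg : #s = P.degree + 1 := by simp [P, degree_prod, hst]
  rw [← (monic_prod_of_monic _ _ fun k _ => monic_X_sub_C (μ k)).leadingCoeff,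
    Lagrange.leadingCoeff_eq_sum hx hdeg]
  refine sum_congr rfl fun i hi => ?_
  have hcard : #(s.erase i) = #t := by rw [card_erase_of_mem hi]; omega
  rw [prod_sub_swap, prod_sub_swap, hcard, mul_div_mul_left _ _ (pow_ne_zero _ (by norm_num))]
  simp [P, eval_prod]

theorem prod_sub_div_prod_sub_nonneg_of_interlace {n i : ℕ} {a lam : ℕ → ℝ}
    (ha : StrictAntiOn a (Set.Iic n))
    (hlam : ∀ k, 1 ≤ k → k ≤ n → a k ≤ lam k ∧ lam k ≤ a (k - 1)) (hi : i ≤ n) :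
    0 ≤ (∏ k ∈ Icc 1 n, (lam k - a i)) / ∏ j ∈ (range (n + 1)).erase i, (a j - a i) := by
  have hpair : ∏ j ∈ (range (n + 1)).erase i, (a j - a i) =
      ∏ k ∈ Icc 1 n, (a (if k ≤ i then k - 1 else k) - a i) := by
    refine (prod_nbij' (fun k => if k ≤ i then k - 1 else k) (fun j => if j < i then j + 1 else j)
      ?_ ?_ ?_ ?_ fun _ _ => rfl).symm <;>
    · intro j hj
      simp only [mem_erase, mem_range, mem_Icc] at hj ⊢
      split_ifs <;> omega
  rw [hpair, ← prod_div_distrib]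
  refine prod_nonneg fun k hk => ?_
  obtain ⟨hk1, hkn⟩ := mem_Icc.mp hk
  obtain ⟨hlow, hup⟩ := hlam k hk1 hkn
  have mem : ∀ {m}, m ≤ n → m ∈ Set.Iic n := id
  split_ifs with hki
  · have : a i ≤ a k := ha.antitoneOn (mem hkn) (mem hi) hki
    have : a i < a (k - 1) := ha (mem (by omega)) (mem hi) (by omega)
    exact div_nonneg (by linarith) (by linarith)
  · have : a k < a i := ha (mem hi) (mem hkn) (by omega)
    have : a (k - 1) ≤ a i := ha.antitoneOn (mem hi) (mem (by omega)) (by omega)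
    exact div_nonneg_of_nonpos (by linarith) (by linarith)

theorem stmt_12_general (n : ℕ) (a : ℕ → ℝ)
    (lam : ℕ → ℝ) (v : ℕ → ℝ)
    (hv : ∀ i ≤ n, v i = a i * (∏ k ∈ Finset.Icc 1 n, (lam k - a i)) /
      ∏ j ∈ (Finset.range (n + 1)).erase i, (a j - a i))
    (hmono : ∀ i < n, a (i + 1) < a i) (hpos : 0 < a n)
    (hlam : ∀ k, 1 ≤ k → k ≤ n → a k ≤ lam k ∧ lam k ≤ a (k - 1)) :
    (∀ i ≤ n, 0 ≤ v i) ∧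
    (∑ i ∈ Finset.range (n + 1), v i / a i = 1) ∧
    (∑ i ∈ Finset.range (n + 1), (Real.sqrt (v i)) ^ 2 / a i = 1) := by
  have hanti : StrictAntiOn a (Set.Iic n) := strictAntiOn_Iic_of_succ_lt hmono
  have hapos : ∀ i ≤ n, 0 < a i := fun i hi =>
    hpos.trans_le (hanti.antitoneOn (Set.mem_Iic.mpr hi) Set.self_mem_Iic hi)
  have hv' : ∀ i ≤ n, v i = a i * ((∏ k ∈ Icc 1 n, (lam k - a i)) /
      ∏ j ∈ (range (n + 1)).erase i, (a j - a i)) := fun i hi => by rw [hv i hi, mul_div_assoc]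
  have hnonneg : ∀ i ≤ n, 0 ≤ v i := fun i hi => by
    rw [hv' i hi]
    exact mul_nonneg (hapos i hi).le (prod_sub_div_prod_sub_nonneg_of_interlace hanti hlam hi)
  have hsum : ∑ i ∈ range (n + 1), v i / a i = 1 := by
    have hinj : Set.InjOn a (range (n + 1)) := hanti.injOn.mono fun i hi => by
      simpa [Nat.lt_succ_iff] using hi
    rw [← Lagrange.sum_prod_sub_div_prod_sub_eq_one hinj (Icc 1 n) lam (by simp)]
    refine sum_congr rfl fun i hi => ?_
    have hin : i ≤ n := Nat.lt_succ_iff.mp (mem_range.mp hi)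
    rw [hv' i hin, mul_div_cancel_left₀ _ (hapos i hin).ne']
  refine ⟨hnonneg, hsum, ?_⟩
  rw [← hsum]
  refine sum_congr rfl fun i hi => ?_
  rw [Real.sq_sqrt (hnonneg i (Nat.lt_succ_iff.mp (mem_range.mp hi)))]

/-- If moreover `a_0 > a_1 > ⋯ > a_n > 0` and
`a_k ≤ λ_k ≤ a_{k−1}`, then all `v_i ≥ 0` and `∑ v_i/a_i = 1`; in particular the
point `u = (√v_0,…,√v_n)` lies on the ellipsoid `∑ u_i²/a_i = 1`. -/
theorem stmt_12 (n : ℕ) (hn : 1 ≤ n) (a : ℕ → ℝ)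
    (ha : ∀ i ≤ n, ∀ j ≤ n, i ≠ j → a i ≠ a j)
    (lam : ℕ → ℝ) (v : ℕ → ℝ)
    (hv : ∀ i ≤ n, v i = a i * (∏ k ∈ Finset.Icc 1 n, (lam k - a i)) /
      ∏ j ∈ (Finset.range (n + 1)).erase i, (a j - a i))
    (hmono : ∀ i < n, a (i + 1) < a i) (hpos : 0 < a n)
    (hlam : ∀ k, 1 ≤ k → k ≤ n → a k ≤ lam k ∧ lam k ≤ a (k - 1)) :
    (∀ i ≤ n, 0 ≤ v i) ∧
    (∑ i ∈ Finset.range (n + 1), v i / a i = 1) ∧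
    (∑ i ∈ Finset.range (n + 1), (Real.sqrt (v i)) ^ 2 / a i = 1) :=
  stmt_12_general n a lam v hv hmono hpos hlam
end

section
/- If 1 ≤ k, m ≤ n with k ≠ m, λ_k ≠ λ_m, and λ_k, λ_m ∉ {a_0, …, a_n}, then ∑_{i=0}^{n} v_i / ((a_i − λ_k)(a_i − λ_m)) = 0 (orthogonality of the elliptic coordinate directions). -/
/-!
After cancelling `(λ_k - a_i)(λ_m - a_i)`, the `i`-th summand is `g(a_i) / ∏_{j ≠ i} (a_j - a_i)`
with `g(x) = x ∏_{j ≠ k, m} (λ_j - x)`, a polynomial of degree `n - 1`. Up to sign, such a sum over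
`n + 1` distinct nodes is the coefficient of `x^n` in the Lagrange interpolant of `g`, that is in
`g` itself, so it vanishes.
-/

open Finset Polynomial

namespace Lagrange

variable {F ι : Type*} [Field F] [DecidableEq ι] {s : Finset ι} {v : ι → F}

theorem sum_eval_div_prod_sub_eq_zero (hvs : Set.InjOn v s) {P : F[X]}
    (hP : P.degree < ↑(#s - 1)) :
    ∑ i ∈ s, P.eval (v i) / ∏ j ∈ s.erase i, (v i - v j) = 0 := by
  rw [← coeff_eq_sum hvs (hP.trans_le (by exact_mod_cast Nat.sub_le _ _))]
  exact coeff_eq_zero_of_degree_lt hP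

end Lagrange

open Lagrange

theorem stmt_13_general (n : ℕ) (a : ℕ → ℝ)
    (ha : ∀ i ≤ n, ∀ j ≤ n, i ≠ j → a i ≠ a j)
    (lam : ℕ → ℝ) (v : ℕ → ℝ)
    (hv : ∀ i ≤ n, v i = a i * (∏ k ∈ Finset.Icc 1 n, (lam k - a i)) /
      ∏ j ∈ (Finset.range (n + 1)).erase i, (a j - a i))
    (k m : ℕ) (hk : 1 ≤ k) (hk2 : k ≤ n) (hm : 1 ≤ m) (hm2 : m ≤ n)
    (hkm : k ≠ m)
    (hlk : ∀ i ≤ n, lam k ≠ a i) (hlm : ∀ i ≤ n, lam m ≠ a i) :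
    ∑ i ∈ Finset.range (n + 1), v i / ((a i - lam k) * (a i - lam m)) = 0 := by
  have hkI : k ∈ Icc 1 n := mem_Icc.mpr ⟨hk, hk2⟩
  have hmI : m ∈ (Icc 1 n).erase k := mem_erase.mpr ⟨hkm.symm, mem_Icc.mpr ⟨hm, hm2⟩⟩
  set S := ((Icc 1 n).erase k).erase m
  have hS : #S = n - 2 := by
    rw [card_erase_of_mem hmI, card_erase_of_mem hkI, Nat.card_Icc]; omega
  -- With the nodes `-a i`, the factors `a j - a i` take the form `v i - v j` used above,
  -- and `Q.eval (-x) = x * ∏ j ∈ S, (lam j - x)`.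
  set Q : ℝ[X] := -(X * nodal S (-lam))
  have hQ : Q.degree < ↑(#(range (n + 1)) - 1) := by
    rw [degree_neg, degree_mul, degree_X, degree_nodal, hS, card_range]
    exact_mod_cast (by omega : 1 + (n - 2) < n + 1 - 1)
  have hinj : Set.InjOn (-a) (range (n + 1)) := neg_injective.comp_injOn fun i hi j hj hij => by
    by_contra hne
    exact ha i (by simpa [Nat.lt_succ_iff] using hi) j (by simpa [Nat.lt_succ_iff] using hj) hne hij
  rw [← sum_eval_div_prod_sub_eq_zero hinj hQ]
  refine sum_congr rfl fun i hi => ?_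
  have hin : i ≤ n := Nat.lt_succ_iff.mp (mem_range.mp hi)
  have hki : a i - lam k ≠ 0 := sub_ne_zero.mpr (hlk i hin).symm
  have hmi : a i - lam m ≠ 0 := sub_ne_zero.mpr (hlm i hin).symm
  rw [hv i hin, ← mul_prod_erase _ _ hkI, ← mul_prod_erase _ _ hmI]
  simp only [Q, eval_neg, eval_mul, eval_X, eval_nodal, Pi.neg_apply, neg_sub_neg]
  field_simp
  ring

/-- orthogonality of the elliptic coordinate directions.  If
`k ≠ m`, `λ_k ≠ λ_m` and `λ_k, λ_m ∉ {a_0,…,a_n}`, then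
`∑_{i=0}^{n} v_i/((a_i−λ_k)(a_i−λ_m)) = 0`. -/
theorem stmt_13 (n : ℕ) (hn : 1 ≤ n) (a : ℕ → ℝ)
    (ha : ∀ i ≤ n, ∀ j ≤ n, i ≠ j → a i ≠ a j)
    (lam : ℕ → ℝ) (v : ℕ → ℝ)
    (hv : ∀ i ≤ n, v i = a i * (∏ k ∈ Finset.Icc 1 n, (lam k - a i)) /
      ∏ j ∈ (Finset.range (n + 1)).erase i, (a j - a i))
    (k m : ℕ) (hk : 1 ≤ k) (hk2 : k ≤ n) (hm : 1 ≤ m) (hm2 : m ≤ n)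
    (hkm : k ≠ m) (hlkm : lam k ≠ lam m)
    (hlk : ∀ i ≤ n, lam k ≠ a i) (hlm : ∀ i ≤ n, lam m ≠ a i) :
    ∑ i ∈ Finset.range (n + 1), v i / ((a i - lam k) * (a i - lam m)) = 0 :=
  stmt_13_general n a ha lam v hv k m hk hk2 hm hm2 hkm hlk hlm
end

section
/- If 1 ≤ k ≤ n and λ_k ∉ {a_0, …, a_n}, then ∑_{i=0}^{n} v_i / (a_i − λ_k)² = −λ_k · ∏_{l≠k}(λ_l − λ_k) / ∏_{i=0}^{n}(a_i − λ_k) (the diagonal metric coefficient of elliptic coordinates). -/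
/-!
Put `P(x) = -x ∏_{l ≠ k} (λ_l - x)`, a polynomial of degree `n`. Splitting the factor `λ_k - a_i`
off the product in `v_i` gives `v_i / (a_i - λ_k)² = P(a_i) / ((a_i - λ_k) ∏_{j ≠ i} (a_j - a_i))`,
so the sum is the partial fraction expansion of `P(λ_k) / ∏_i (a_i - λ_k)` at the `n + 1` nodes
`a_i`: this is Lagrange interpolation of `P` at these nodes, evaluated at `λ_k`.
-/

open Finset Polynomial Lagrange

theorem Finset.prod_sub_comm {ι R : Type*} [CommRing R] (s : Finset ι) (f g : ι → R) :
    ∏ i ∈ s, (f i - g i) = (-1) ^ #s * ∏ i ∈ s, (g i - f i) := by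
  rw [← prod_neg]; simp_rw [neg_sub]

theorem Lagrange.sum_eval_div_eq_eval_div_prod {F ι : Type*} [Field F] [DecidableEq ι]
    {s : Finset ι} {v : ι → F} {x : F} {P : F[X]} (hvs : Set.InjOn v s) (hP : P.degree < #s)
    (hx : ∀ i ∈ s, x ≠ v i) :
    ∑ i ∈ s, P.eval (v i) / ((v i - x) * ∏ j ∈ s.erase i, (v j - v i)) =
      P.eval x / ∏ i ∈ s, (v i - x) := by
  have hbary := eval_interpolate_not_at_node (fun i => P.eval (v i)) hx
  rw [← eq_interpolate hvs hP, eval_nodal, prod_sub_comm] at hbary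
  have hnodes : ∏ i ∈ s, (v i - x) ≠ 0 :=
    prod_ne_zero_iff.2 fun i hi => sub_ne_zero.2 (hx i hi).symm
  have hterm : ∀ i ∈ s, P.eval (v i) / ((v i - x) * ∏ j ∈ s.erase i, (v j - v i)) =
      (-1) ^ #s * (nodalWeight s v i * (x - v i)⁻¹ * P.eval (v i)) := by
    intro i hi
    rw [prod_sub_comm, nodalWeight, prod_inv_distrib, ← card_erase_add_one hi, ← neg_sub x]
    generalize #(s.erase i) = m
    rcases neg_one_pow_eq_or F m with h | h <;> rw [pow_succ, h] <;> field_simp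
  rw [sum_congr rfl hterm, ← mul_sum, hbary, mul_right_comm, mul_div_cancel_right₀ _ hnodes]

theorem Polynomial.natDegree_prod_C_sub_X_le {ι R : Type*} [CommRing R] (s : Finset ι)
    (c : ι → R) : (∏ i ∈ s, (C (c i) - X)).natDegree ≤ #s := by
  refine (natDegree_prod_le _ _).trans ?_
  exact (sum_le_sum fun _ _ => by compute_degree).trans_eq (card_eq_sum_ones s).symm

theorem stmt_14_general (n : ℕ) (a : ℕ → ℝ)
    (ha : ∀ i ≤ n, ∀ j ≤ n, i ≠ j → a i ≠ a j)
    (lam : ℕ → ℝ) (v : ℕ → ℝ)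
    (hv : ∀ i ≤ n, v i = a i * (∏ k ∈ Finset.Icc 1 n, (lam k - a i)) /
      ∏ j ∈ (Finset.range (n + 1)).erase i, (a j - a i))
    (k : ℕ) (hk : 1 ≤ k) (hk2 : k ≤ n)
    (hlk : ∀ i ≤ n, lam k ≠ a i) :
    ∑ i ∈ Finset.range (n + 1), v i / (a i - lam k) ^ 2 =
      -lam k * (∏ l ∈ (Finset.Icc 1 n).erase k, (lam l - lam k)) /
        ∏ i ∈ Finset.range (n + 1), (a i - lam k) := by
  have hle {i : ℕ} (hi : i ∈ range (n + 1)) : i ≤ n := Nat.lt_succ_iff.1 (mem_range.1 hi)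
  have hinj : Set.InjOn a (range (n + 1)) := fun i hi j hj hij =>
    by_contra fun hne => ha i (hle hi) j (hle hj) hne hij
  have hkmem : k ∈ Icc 1 n := mem_Icc.2 ⟨hk, hk2⟩
  let P : ℝ[X] := -(X * ∏ m ∈ (Icc 1 n).erase k, (C (lam m) - X))
  have hPeval (y : ℝ) : P.eval y = -(y * ∏ m ∈ (Icc 1 n).erase k, (lam m - y)) := by
    simp [P, eval_prod]
  have hPdeg : P.degree < #(range (n + 1)) := by
    have hprod := natDegree_prod_C_sub_X_le ((Icc 1 n).erase k) lam
    rw [card_erase_of_mem hkmem, Nat.card_Icc] at hprod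
    rw [card_range]
    refine (degree_le_of_natDegree_le ?_).trans_lt (by exact_mod_cast lt_add_one n)
    rw [natDegree_neg]
    exact natDegree_mul_le.trans (by rw [natDegree_X]; omega)
  have hterm : ∀ i ∈ range (n + 1), v i / (a i - lam k) ^ 2 =
      P.eval (a i) / ((a i - lam k) * ∏ j ∈ (range (n + 1)).erase i, (a j - a i)) := by
    intro i hi
    have hik : a i - lam k ≠ 0 := sub_ne_zero.2 (hlk i (hle hi)).symm
    have hnodes : ∏ j ∈ (range (n + 1)).erase i, (a j - a i) ≠ 0 :=
      prod_ne_zero_iff.2 fun j hj => sub_ne_zero.2 fun h =>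
        ne_of_mem_erase hj (hinj (mem_of_mem_erase hj) hi h)
    rw [hv i (hle hi), hPeval, ← mul_prod_erase _ _ hkmem]
    field_simp
    ring
  rw [sum_congr rfl hterm, sum_eval_div_eq_eval_div_prod hinj hPdeg fun i hi => hlk i (hle hi),
    hPeval, neg_mul]

/-- diagonal metric coefficient of elliptic coordinates.  If
`λ_k ∉ {a_0,…,a_n}`, then `∑_{i=0}^{n} v_i/(a_i−λ_k)² =
−λ_k·∏_{l≠k}(λ_l−λ_k)/∏_{i=0}^{n}(a_i−λ_k)`. -/
theorem stmt_14 (n : ℕ) (hn : 1 ≤ n) (a : ℕ → ℝ)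
    (ha : ∀ i ≤ n, ∀ j ≤ n, i ≠ j → a i ≠ a j)
    (lam : ℕ → ℝ) (v : ℕ → ℝ)
    (hv : ∀ i ≤ n, v i = a i * (∏ k ∈ Finset.Icc 1 n, (lam k - a i)) /
      ∏ j ∈ (Finset.range (n + 1)).erase i, (a j - a i))
    (k : ℕ) (hk : 1 ≤ k) (hk2 : k ≤ n)
    (hlk : ∀ i ≤ n, lam k ≠ a i) :
    ∑ i ∈ Finset.range (n + 1), v i / (a i - lam k) ^ 2 =
      -lam k * (∏ l ∈ (Finset.Icc 1 n).erase k, (lam l - lam k)) /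
        ∏ i ∈ Finset.range (n + 1), (a i - lam k) :=
  stmt_14_general n a ha lam v hv k hk hk2 hlk
end
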